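/- arXiv:1509.05892 — 9 statements merged into one kernel-verified Lean document; each statement's English description precedes it below -/
import Mathlib

section
/- Let P := ∑_{i=0}^{m} s_{(m^n,i)} X^i and Q := ∑_{i=0}^{n} (−1)^i s_{((m+1)^i, m^{n−i})} X^i, polynomials of degree at most m and n respectively. Then the Padé approximation condition holds: X^{m+n+1} divides Y·Q − P in the ring of formal power series R[[X]]. -/
/-! The coefficient of `X^k` in `Y * Q` is `∑ i, (-1)^i p_{k-i} s_{((m+1)^i, m^(n-i))}`, which is
the Laplace expansion of `s_{(m^n, k)}` along its last row. For `k ≤ m` this is the coefficient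
of `X^k` in `P`; for `m < k ≤ m + n` the last row of the Jacobi–Trudi matrix of `(m^n, k)`
coincides with its row `m + n - k`, so the determinant vanishes. -/

open Finset
open scoped Matrix

section

variable {R : Type*}

namespace Matrix

def jacobiTrudi (p : ℤ → R) {l : ℕ} (lam : Fin l → ℤ) : Matrix (Fin l) (Fin l) R :=
  of fun i j => p (lam i - (i : ℕ) + (j : ℕ))

variable (p : ℤ → R)

theorem jacobiTrudi_submatrix_last_succAbove (m k : ℤ) (n : ℕ) (j : Fin (n + 1)) :
    (jacobiTrudi p fun a : Fin (n + 1) => if (a : ℕ) < n then m else k).submatrix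
        (Fin.last n).succAbove j.succAbove =
      (jacobiTrudi p fun a : Fin n => if (a : ℕ) < n - j then m + 1 else m)ᵀ.submatrix
        Fin.revPerm Fin.revPerm := by
  ext a b
  simp only [jacobiTrudi, submatrix_apply, of_apply, transpose_apply,
    Fin.succAbove_last, Fin.val_castSucc, a.is_lt, if_true, Fin.revPerm_apply, Fin.val_rev]
  rcases lt_or_ge (b : ℕ) j with hb | hb
  · rw [Fin.succAbove_of_castSucc_lt _ _ (Fin.lt_def.mpr hb), if_neg (by omega),
      Fin.val_castSucc]
    congr 1; omega
  · rw [Fin.succAbove_of_le_castSucc _ _ (Fin.le_def.mpr hb), if_pos (by omega), Fin.val_succ]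
    congr 1; push_cast; omega

theorem det_jacobiTrudi_eq_sum [CommRing R] (m k : ℤ) (n : ℕ) :
    (jacobiTrudi p fun a : Fin (n + 1) => if (a : ℕ) < n then m else k).det =
      ∑ i ∈ range (n + 1), (-1) ^ i * p (k - i) *
        (jacobiTrudi p fun a : Fin n => if (a : ℕ) < i then m + 1 else m).det := by
  rw [det_succ_row _ (Fin.last n), ← Fin.sum_univ_eq_sum_range]
  refine Fintype.sum_equiv Fin.revPerm _ _ fun j => ?_
  have hj : j.val ≤ n := Fin.is_le j
  have hsign : (-1 : R) ^ (n + j.val) = (-1) ^ (n - j.val) := by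
    rw [show n + j.val = n - j.val + 2 * j.val by omega, pow_add, pow_mul, neg_one_sq, one_pow,
      mul_one]
  have hentry : jacobiTrudi p (fun a : Fin (n + 1) => if (a : ℕ) < n then m else k)
      (Fin.last n) j = p (k - (n - j.val : ℕ)) := by
    simp only [jacobiTrudi, of_apply, Fin.val_last, lt_irrefl, if_false]
    congr 1; omega
  rw [Fin.val_last, hsign, hentry, jacobiTrudi_submatrix_last_succAbove, det_submatrix_equiv_self,
    det_transpose, Fin.revPerm_apply, Fin.val_rev, Nat.add_sub_add_right]

theorem det_jacobiTrudi_eq_zero_of_lt_of_le [CommRing R] {m k n : ℕ} (hmk : m < k)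
    (hkn : k ≤ m + n) :
    (jacobiTrudi p fun a : Fin (n + 1) => if (a : ℕ) < n then (m : ℤ) else k).det = 0 := by
  refine det_zero_of_row_eq (i := ⟨m + n - k, by omega⟩) (j := Fin.last n)
    (Fin.ne_of_val_ne (by simp only [Fin.val_last]; omega)) (funext fun b => ?_)
  simp only [jacobiTrudi, of_apply, Fin.val_last, lt_irrefl, if_false,
    if_pos (show m + n - k < n by omega)]
  congr 1; omega

end Matrix

namespace PowerSeries

theorem coeff_mk_mul_X_pow_of_neg_eq_zero [Semiring R] (p : ℤ → R)
    (hp : ∀ i : ℤ, i < 0 → p i = 0) (i k : ℕ) :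
    coeff k ((mk fun k : ℕ => p k) * X ^ i) = p (k - i) := by
  rw [coeff_mul_X_pow', coeff_mk]
  split_ifs with h
  · rw [Nat.cast_sub h]
  · exact (hp _ (by omega)).symm

theorem coeff_mk_mul_sum_C_mul_X_pow [CommSemiring R] (p : ℤ → R)
    (hp : ∀ i : ℤ, i < 0 → p i = 0) (q : ℕ → R) (s : Finset ℕ) (k : ℕ) :
    coeff k ((mk fun k : ℕ => p k) *
        ((∑ i ∈ s, Polynomial.C (q i) * Polynomial.X ^ i : Polynomial R) : R⟦X⟧)) =
      ∑ i ∈ s, q i * p (k - i) := by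
  rw [← Polynomial.coeToPowerSeries.ringHom_apply, map_sum, mul_sum, map_sum]
  refine sum_congr rfl fun i _ => ?_
  simp only [map_mul, map_pow, Polynomial.coeToPowerSeries.ringHom_apply, Polynomial.coe_C,
    Polynomial.coe_X]
  rw [mul_left_comm, coeff_C_mul, coeff_mk_mul_X_pow_of_neg_eq_zero p hp]

end PowerSeries

theorem Polynomial.coeff_sum_C_mul_X_pow [Semiring R] (a : ℕ → R) (s : Finset ℕ) (k : ℕ) :
    (∑ i ∈ s, C (a i) * X ^ i).coeff k = if k ∈ s then a k else 0 := by
  simp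

end

/-- Padé approximation condition for the Jacobi–Trudi determinant polynomials.
`s l lam` is the Schur-type determinant `det (p (lam i - i + j))_{i,j=1}^l`. -/
theorem pade_approximation_condition
    (R : Type*) [CommRing R] (p : ℤ → R) (hp : ∀ i : ℤ, i < 0 → p i = 0)
    (m n : ℕ)
    (s : (l : ℕ) → (Fin l → ℤ) → R)
    (hs : ∀ (l : ℕ) (lam : Fin l → ℤ),
      s l lam = Matrix.det (Matrix.of fun i j : Fin l =>
        p (lam i - ((i : ℕ) : ℤ) + ((j : ℕ) : ℤ))))
    (Y : PowerSeries R) (hY : Y = PowerSeries.mk fun k : ℕ => p (k : ℤ))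
    (P Q : Polynomial R)
    (hP : P = ∑ i ∈ Finset.range (m + 1),
      Polynomial.C (s (n + 1) (fun j => if (j : ℕ) < n then (m : ℤ) else (i : ℤ)))
        * Polynomial.X ^ i)
    (hQ : Q = ∑ i ∈ Finset.range (n + 1),
      Polynomial.C ((-1) ^ i *
          s n (fun j => if (j : ℕ) < i then (m : ℤ) + 1 else (m : ℤ)))
        * Polynomial.X ^ i) :
    (PowerSeries.X : PowerSeries R) ^ (m + n + 1) ∣
      Y * (Q : PowerSeries R) - (P : PowerSeries R) := by
  have hs_det : ∀ (l : ℕ) (lam : Fin l → ℤ), s l lam = (Matrix.jacobiTrudi p lam).det := hs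
  rw [PowerSeries.X_pow_dvd_iff]
  intro k hk
  have hYQ : PowerSeries.coeff k (Y * (Q : PowerSeries R)) = (Matrix.jacobiTrudi p
      fun a : Fin (n + 1) => if (a : ℕ) < n then (m : ℤ) else k).det := by
    rw [hY, hQ, PowerSeries.coeff_mk_mul_sum_C_mul_X_pow p hp, Matrix.det_jacobiTrudi_eq_sum]
    simp only [hs_det, mul_right_comm]
  rw [map_sub, hYQ, Polynomial.coeff_coe, hP, Polynomial.coeff_sum_C_mul_X_pow, hs_det]
  split_ifs with hkm
  · exact sub_self _
  · rw [mem_range] at hkm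
    rw [sub_zero, Matrix.det_jacobiTrudi_eq_zero_of_lt_of_le p (by omega) (by omega)]
end

section
/- Let Q := ∑_{i=0}^{n} (−1)^i s_{((m+1)^i, m^{n−i})} X^i. Then for every k ≥ 0, the coefficient of X^k in the formal power series Y·Q equals the (n+1)×(n+1) determinant s_{(m^n,k)}, i.e. the determinant of the matrix whose rows i = 1,…,n have entries p_{m−i+j} (j = 1,…,n+1) and whose last row has entries p_{k−(n+1)+j} (j = 1,…,n+1). -/
/-!
Expanding `s_{(m^n,k)}` along its last row gives `∑_j (-1)^(n+j) p_{k-n+j} M_j`, where the minor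
`M_j` omits column `j` from the `n` rows `p_{m-i+c}`. Transposing `M_j` and reversing its rows and
columns turns it into the Jacobi–Trudi matrix of `((m+1)^(n-j), m^j)`, so with `i = n - j` the
expansion is `∑_i (-1)^i s_{((m+1)^i, m^(n-i))} p_{k-i}`, which is the `k`-th coefficient of `Y·Q`.
-/

open Finset

theorem neg_one_pow_tsub_eq_add {R : Type*} [Monoid R] [HasDistribNeg R] {n i : ℕ} (h : i ≤ n) :
    (-1 : R) ^ (n - i) = (-1) ^ (n + i) := by
  rw [show n + i = (n - i) + 2 * i by omega, pow_add, pow_mul]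
  simp

theorem coeff_mk_mul_sum_C_mul_X_pow {R : Type*} [CommSemiring R] (p : ℤ → R)
    (hp : ∀ i : ℤ, i < 0 → p i = 0) (a : ℕ → R) (N k : ℕ) :
    PowerSeries.coeff k (PowerSeries.mk (fun j : ℕ => p j) *
        ((∑ i ∈ range N, Polynomial.C (a i) * Polynomial.X ^ i : Polynomial R) : PowerSeries R))
      = ∑ i ∈ range N, a i * p (k - i) := by
  rw [← Polynomial.coeToPowerSeries.ringHom_apply, map_sum, mul_sum, map_sum]
  refine sum_congr rfl fun i _ => ?_
  simp only [map_mul, map_pow, Polynomial.coeToPowerSeries.ringHom_apply, Polynomial.coe_C,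
    Polynomial.coe_X, mul_left_comm _ (PowerSeries.C _), PowerSeries.coeff_C_mul,
    PowerSeries.coeff_mul_X_pow', PowerSeries.coeff_mk]
  split_ifs with h
  · push_cast [h]; rfl
  · rw [hp _ (by omega), mul_zero]

section
variable {R : Type*} [CommRing R]

def jacobiTrudiMatrix (p : ℤ → R) {l : ℕ} (lam : Fin l → ℤ) : Matrix (Fin l) (Fin l) R :=
  Matrix.of fun i j => p (lam i - (i : ℕ) + (j : ℕ))

def stepPartition (a : ℤ) (n i : ℕ) : Fin n → ℤ := fun r => if (r : ℕ) < i then a + 1 else a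

theorem det_submatrix_succAbove_toeplitz (p : ℤ → R) (a : ℤ) (n : ℕ) (j : Fin (n + 1)) :
    ((Matrix.of fun (i : Fin n) (c : Fin (n + 1)) => p (a - (i : ℕ) + (c : ℕ))).submatrix id
        j.succAbove).det = (jacobiTrudiMatrix p (stepPartition a n (n - j))).det := by
  rw [← Matrix.det_transpose, ← Matrix.det_submatrix_equiv_self Fin.revPerm]
  congr 1
  ext r c
  simp only [Matrix.submatrix_apply, Matrix.transpose_apply, Fin.revPerm_apply, Matrix.of_apply,
    jacobiTrudiMatrix, stepPartition, id, Fin.succAbove, Fin.lt_def]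
  have := r.isLt
  have := c.isLt
  split_ifs <;> simp only [Fin.val_castSucc, Fin.val_succ, Fin.val_rev] at * <;>
    first | omega | (congr 1; push_cast; omega)

theorem det_toeplitz_rows_with_last_row (p : ℤ → R) (a : ℤ) (n : ℕ) (v : Fin (n + 1) → R) :
    (Matrix.of fun i j : Fin (n + 1) => if (i : ℕ) < n then p (a - (i : ℕ) + (j : ℕ)) else v j).det
      = ∑ j : Fin (n + 1),
          (-1) ^ (n + (j : ℕ)) * v j * (jacobiTrudiMatrix p (stepPartition a n (n - j))).det := by
  rw [Matrix.det_succ_row _ (Fin.last n)]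
  refine Fintype.sum_congr _ _ fun j => ?_
  rw [Fin.succAbove_last, ← det_submatrix_succAbove_toeplitz]
  simp only [Matrix.of_apply, Fin.val_last, lt_irrefl, if_false]
  congr 2
  ext i c
  simp [i.isLt]

end

/-- every coefficient of `Y·Q` is the Schur-type determinant `s_{(m^n,k)}`. -/
theorem coeff_Y_mul_Q_eq_schur_det
    (R : Type*) [CommRing R] (p : ℤ → R) (hp : ∀ i : ℤ, i < 0 → p i = 0)
    (m n : ℕ)
    (s : (l : ℕ) → (Fin l → ℤ) → R)
    (hs : ∀ (l : ℕ) (lam : Fin l → ℤ),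
      s l lam = Matrix.det (Matrix.of fun i j : Fin l =>
        p (lam i - ((i : ℕ) : ℤ) + ((j : ℕ) : ℤ))))
    (Y : PowerSeries R) (hY : Y = PowerSeries.mk fun k : ℕ => p (k : ℤ))
    (Q : Polynomial R)
    (hQ : Q = ∑ i ∈ Finset.range (n + 1),
      Polynomial.C ((-1) ^ i *
          s n (fun j => if (j : ℕ) < i then (m : ℤ) + 1 else (m : ℤ)))
        * Polynomial.X ^ i) :
    ∀ k : ℕ, PowerSeries.coeff k (Y * (Q : PowerSeries R)) =
      Matrix.det (Matrix.of fun i j : Fin (n + 1) =>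
        if (i : ℕ) < n then p ((m : ℤ) - ((i : ℕ) : ℤ) + ((j : ℕ) : ℤ))
        else p ((k : ℤ) - (n : ℤ) + ((j : ℕ) : ℤ))) := by
  intro k
  rw [hY, hQ, coeff_mk_mul_sum_C_mul_X_pow p hp, det_toeplitz_rows_with_last_row,
    Fin.sum_univ_eq_sum_range (fun j => (-1) ^ (n + j) * p (k - n + j) *
      (jacobiTrudiMatrix p (stepPartition m n (n - j))).det), ← sum_range_reflect]
  refine sum_congr rfl fun i hi => ?_
  have hin : i ≤ n := Nat.le_of_lt_succ (mem_range.mp hi)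
  rw [hs, show n + 1 - 1 - i = n - i by omega, neg_one_pow_tsub_eq_add hin,
    show (k : ℤ) - (n - i : ℕ) = k - n + i by omega]
  exact mul_right_comm _ _ _
end

section
/- For every nonzero x ∈ ℂ the following two single-determinant expressions hold: (1) ∑_{i=0}^{m} s_{(m^n,i)} x^i = x^m · det( (p̃_{m−i+j})_{i,j=1}^{n+1} ), where p̃_l := ∑_{j≥0} x^{−j} p_{l−j} (a finite sum since p vanishes at negative indices); and (2) ∑_{i=0}^{n} (−1)^i s_{((m+1)^i, m^{n−i})} x^i = (−x)^n · det( (p̂_{m+1−i+j})_{i,j=1}^{n} ), where p̂_l := p_l − x^{−1} p_{l−1}. -/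
/-!
For (1), the Jacobi–Trudi matrices of `(m^n, i)` differ only in their last row, so by linearity
the sum is a single determinant with last row `∑ᵢ xⁱ p_{i-n+j} = x^m p̃_{m-n+j}`. Since
`p̃_l = p_l + x⁻¹ p̃_{l-1}`, adding `x⁻¹` times each row to the one above it, from the bottom up,
turns the remaining rows into rows of `p̃`.

For (2), border the `(n+1) × n` matrix `(p_{m+1-r+c})` with the column `(x^r)`. Deleting row `k`
leaves the Jacobi–Trudi matrix of `((m+1)^k, m^{n-k})`, so Laplace expansion along the border gives
the alternating sum. Subtracting `x⁻¹` times each row from the one above it clears the border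
except for its last entry `x^n` and produces the rows of `p̂`.
-/

open Finset

namespace Matrix

variable {R : Type*} [CommRing R]

theorem det_updateRow_sum_smul {n ι : Type*} [Fintype n] [DecidableEq n] (M : Matrix n n R)
    (j : n) (s : Finset ι) (c : ι → R) (u : ι → n → R) :
    det (M.updateRow j (∑ i ∈ s, c i • u i)) = ∑ i ∈ s, c i * det (M.updateRow j (u i)) := by
  let L := (detRowAlternating : (n → R) [⋀^n]→ₗ[R] R).toMultilinearMap.toLinearMap M j
  change L _ = ∑ i ∈ s, c i * L (u i)
  simp [map_sum, map_smul]

theorem det_eq_of_forall_row_eq_smul_add_succ {n : ℕ} {A B : Matrix (Fin (n + 1)) (Fin (n + 1)) R}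
    (c : Fin n → R) (A_last : ∀ j, A (Fin.last n) j = B (Fin.last n) j)
    (A_castSucc : ∀ (i : Fin n) (j), A i.castSucc j = B i.castSucc j + c i * A i.succ j) :
    det A = det B := by
  rw [← det_submatrix_equiv_self Fin.revPerm A, ← det_submatrix_equiv_self Fin.revPerm B]
  refine det_eq_of_forall_row_eq_smul_add_pred (fun i => c i.rev) (fun j => ?_) fun i j => ?_
  · simpa using A_last _
  · simpa [Fin.rev_succ, Fin.rev_castSucc] using A_castSucc i.rev j.rev

theorem det_of_snoc_eq_sum {n : ℕ} (A : Matrix (Fin (n + 1)) (Fin n) R) (v : Fin (n + 1) → R) :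
    det (of fun r => Fin.snoc (A r) (v r)) =
      ∑ k : Fin (n + 1), (-1) ^ (k + n : ℕ) * v k * det (A.submatrix k.succAbove id) := by
  rw [det_succ_column _ (Fin.last n)]
  refine sum_congr rfl fun k _ => ?_
  congr 2
  · simp
  · ext i j; simp

variable {K : Type*} [Field K]

theorem det_of_snoc_pow {n : ℕ} (A : Matrix (Fin (n + 1)) (Fin n) K) {y : K} (hy : y ≠ 0) :
    det (of fun r => Fin.snoc (A r) (y ^ (r : ℕ))) =
      y ^ n * det (of fun i => A i.castSucc - y⁻¹ • A i.succ) := by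
  set A' : Matrix (Fin (n + 1)) (Fin n) K :=
    Fin.snoc (fun i => A i.castSucc - y⁻¹ • A i.succ) (A (Fin.last n))
  have hcleared : det (of fun r => Fin.snoc (A r) (y ^ (r : ℕ))) =
      det (of fun r => Fin.snoc (A' r) (Pi.single (M := fun _ => K) (Fin.last n) (y ^ n) r)) := by
    refine det_eq_of_forall_row_eq_smul_add_succ (fun _ => y⁻¹) (fun j => by simp [A']) ?_
    intro i j
    induction j using Fin.lastCases with
    | last =>
      simp only [A', of_apply, Fin.val_castSucc, Fin.val_succ, Fin.snoc_last, Fin.snoc_castSucc,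
        Pi.single_eq_of_ne (Fin.castSucc_ne_last i), zero_add]
      field_simp
      ring
    | cast j => simp [A']
  have hA' :
      A'.submatrix (Fin.last n).succAbove id = of fun i => A i.castSucc - y⁻¹ • A i.succ := by
    ext i j
    change A' ((Fin.last n).succAbove i) j = _
    simp [A']
  rw [hcleared, det_of_snoc_eq_sum, Fintype.sum_eq_single (Fin.last n) fun k hk => by simp [hk], hA']
  simp [Even.neg_one_pow ⟨n, rfl⟩]

theorem sum_neg_one_pow_mul_det_submatrix_succAbove {n : ℕ} (A : Matrix (Fin (n + 1)) (Fin n) K)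
    {y : K} (hy : y ≠ 0) :
    ∑ k : Fin (n + 1), (-1) ^ (k : ℕ) * y ^ (k : ℕ) * det (A.submatrix k.succAbove id) =
      (-y) ^ n * det (of fun i => A i.castSucc - y⁻¹ • A i.succ) := by
  rw [neg_pow, mul_assoc, ← det_of_snoc_pow A hy, det_of_snoc_eq_sum, mul_sum]
  have hsq : ((-1 : K) ^ n) * (-1) ^ n = 1 := by rw [← mul_pow]; simp
  refine sum_congr rfl fun k _ => ?_
  linear_combination (-(-1) ^ (k : ℕ) * y ^ (k : ℕ) * det (A.submatrix k.succAbove id)) * hsq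

end Matrix

def jacobiTrudi {R : Type*} (p : ℤ → R) {l : ℕ} (lam : Fin l → ℤ) : Matrix (Fin l) (Fin l) R :=
  Matrix.of fun i j => p (lam i - ((i : ℕ) : ℤ) + ((j : ℕ) : ℤ))

section

variable {R : Type*} (p : ℤ → R) {n : ℕ} (a : ℤ)

theorem jacobiTrudi_eq_updateRow_last (b : ℤ) :
    jacobiTrudi p (fun j : Fin (n + 1) => if (j : ℕ) < n then a else b) =
      (jacobiTrudi p fun _ => a).updateRow (Fin.last n) fun c => p (b - n + c) := by
  ext i c
  induction i using Fin.lastCases with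
  | last => simp [jacobiTrudi]
  | cast i => simp [jacobiTrudi, Fin.castSucc_ne_last]

theorem submatrix_succAbove_eq_jacobiTrudi (k : Fin (n + 1)) :
    (Matrix.of fun (r : Fin (n + 1)) (c : Fin n) => p (a + 1 - r + c)).submatrix k.succAbove id =
      jacobiTrudi p fun j : Fin n => if (j : ℕ) < k then a + 1 else a := by
  ext i c
  by_cases h : (i : ℕ) < k
  · simp [jacobiTrudi, h, Fin.succAbove_of_castSucc_lt k i (Fin.lt_def.2 h)]
  · simp [jacobiTrudi, h, Fin.succAbove_of_le_castSucc k i (Fin.le_def.2 (by simpa using h))]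

end

section

variable {K : Type*} [Field K] {p : ℤ → K} {x : K} {ptil : ℤ → K}

theorem ptil_eq_sum_range (hp : ∀ i : ℤ, i < 0 → p i = 0)
    (hptil : ∀ l : ℤ, ptil l = ∑ j ∈ range (l.toNat + 1), x ^ (-(j : ℤ)) * p (l - (j : ℤ)))
    {l : ℤ} {N : ℕ} (hN : l.toNat < N) :
    ptil l = ∑ j ∈ range N, x⁻¹ ^ j * p (l - j) := by
  rw [hptil]
  refine sum_subset (range_subset_range.2 hN) (fun j hj hj' => ?_) |>.trans (sum_congr rfl ?_)
  · simp only [mem_range] at hj hj'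
    rw [hp _ (by omega), mul_zero]
  · intro j _
    rw [zpow_neg, zpow_natCast, inv_pow]

theorem ptil_eq_add_inv_mul (hp : ∀ i : ℤ, i < 0 → p i = 0)
    (hptil : ∀ l : ℤ, ptil l = ∑ j ∈ range (l.toNat + 1), x ^ (-(j : ℤ)) * p (l - (j : ℤ)))
    (l : ℤ) : ptil l = p l + x⁻¹ * ptil (l - 1) := by
  rw [ptil_eq_sum_range hp hptil (N := l.toNat + 2) (by omega),
    ptil_eq_sum_range hp hptil (l := l - 1) (N := l.toNat + 1) (by omega), sum_range_succ',
    add_comm, mul_sum]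
  congr 1
  · simp
  · refine sum_congr rfl fun j _ => ?_
    push_cast
    ring_nf

theorem sum_pow_mul_eq_pow_mul_ptil (hp : ∀ i : ℤ, i < 0 → p i = 0) (hx : x ≠ 0)
    (hptil : ∀ l : ℤ, ptil l = ∑ j ∈ range (l.toNat + 1), x ^ (-(j : ℤ)) * p (l - (j : ℤ)))
    (m : ℕ) {l : ℤ} (hl : l ≤ m) :
    ∑ i ∈ range (m + 1), x ^ i * p (l - m + i) = x ^ m * ptil l := by
  rw [ptil_eq_sum_range hp hptil (N := m + 1) (by omega), mul_sum, ← sum_range_reflect]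
  refine sum_congr rfl fun j hj => ?_
  have hjm : j ≤ m := Nat.lt_succ_iff.1 (mem_range.1 hj)
  rw [show m + 1 - 1 - j = m - j by omega, pow_sub₀ x hx hjm, inv_pow, Nat.cast_sub hjm]
  ring_nf

theorem det_updateRow_last_ptil (hp : ∀ i : ℤ, i < 0 → p i = 0)
    (hptil : ∀ l : ℤ, ptil l = ∑ j ∈ range (l.toNat + 1), x ^ (-(j : ℤ)) * p (l - (j : ℤ)))
    (n : ℕ) (a : ℤ) :
    ((jacobiTrudi p fun _ : Fin (n + 1) => a).updateRow (Fin.last n)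
        fun c => ptil (a - n + c)).det = (jacobiTrudi ptil fun _ : Fin (n + 1) => a).det := by
  refine (Matrix.det_eq_of_forall_row_eq_smul_add_succ (fun _ => x⁻¹) (fun c => ?_)
    fun i c => ?_).symm
  · simp [jacobiTrudi]
  · simp only [jacobiTrudi, Matrix.of_apply, Matrix.updateRow_ne (Fin.castSucc_ne_last i),
      Fin.val_succ, Fin.val_castSucc]
    rw [ptil_eq_add_inv_mul hp hptil]
    push_cast
    ring_nf

theorem sum_det_jacobiTrudi_mul_pow (hp : ∀ i : ℤ, i < 0 → p i = 0) (hx : x ≠ 0)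
    (hptil : ∀ l : ℤ, ptil l = ∑ j ∈ range (l.toNat + 1), x ^ (-(j : ℤ)) * p (l - (j : ℤ)))
    (m n : ℕ) :
    ∑ i ∈ range (m + 1),
        (jacobiTrudi p fun j : Fin (n + 1) => if (j : ℕ) < n then (m : ℤ) else i).det * x ^ i =
      x ^ m * (jacobiTrudi ptil fun _ : Fin (n + 1) => (m : ℤ)).det := by
  set P := jacobiTrudi p fun _ : Fin (n + 1) => (m : ℤ)
  have hrow : ∑ i ∈ range (m + 1), x ^ i • (fun c : Fin (n + 1) => p (i - n + c)) =
      x ^ m • fun c : Fin (n + 1) => ptil (m - n + c) := by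
    ext c
    simp only [Finset.sum_apply, Pi.smul_apply, smul_eq_mul]
    rw [← sum_pow_mul_eq_pow_mul_ptil hp hx hptil m (by have := c.isLt; omega)]
    refine sum_congr rfl fun i _ => ?_
    ring_nf
  calc _ = ∑ i ∈ range (m + 1), x ^ i * (P.updateRow (Fin.last n) fun c => p (i - n + c)).det := by
        simp_rw [jacobiTrudi_eq_updateRow_last, mul_comm]
        rfl
    _ = x ^ m * (P.updateRow (Fin.last n) fun c => ptil (m - n + c)).det := by
        rw [← Matrix.det_updateRow_sum_smul, hrow, Matrix.det_updateRow_smul]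
    _ = _ := by rw [det_updateRow_last_ptil hp hptil]

theorem sum_neg_one_pow_mul_det_jacobiTrudi (hx : x ≠ 0) {phat : ℤ → K}
    (hphat : ∀ l : ℤ, phat l = p l - x⁻¹ * p (l - 1)) (m n : ℕ) :
    ∑ i ∈ range (n + 1), (-1) ^ i *
        (jacobiTrudi p fun j : Fin n => if (j : ℕ) < i then (m : ℤ) + 1 else (m : ℤ)).det * x ^ i =
      (-x) ^ n * (jacobiTrudi phat fun _ : Fin n => (m : ℤ) + 1).det := by
  set A : Matrix (Fin (n + 1)) (Fin n) K := Matrix.of fun r c => p (m + 1 - r + c)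
  have hphatA : jacobiTrudi phat (fun _ : Fin n => (m : ℤ) + 1) =
      Matrix.of fun i => A i.castSucc - x⁻¹ • A i.succ := by
    ext i c
    simp only [jacobiTrudi, A, hphat, Matrix.of_apply, Pi.sub_apply, Pi.smul_apply, smul_eq_mul,
      Fin.val_succ, Fin.val_castSucc]
    push_cast
    ring_nf
  rw [hphatA, ← Matrix.sum_neg_one_pow_mul_det_submatrix_succAbove A hx,
    ← Fin.sum_univ_eq_sum_range]
  refine sum_congr rfl fun k _ => ?_
  rw [submatrix_succAbove_eq_jacobiTrudi]
  ring

end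

/-- single-determinant expressions for the Padé approximating polynomials. -/
theorem single_determinant_expressions
    (p : ℤ → ℂ) (hp : ∀ i : ℤ, i < 0 → p i = 0)
    (m n : ℕ)
    (s : (l : ℕ) → (Fin l → ℤ) → ℂ)
    (hs : ∀ (l : ℕ) (lam : Fin l → ℤ),
      s l lam = Matrix.det (Matrix.of fun i j : Fin l =>
        p (lam i - ((i : ℕ) : ℤ) + ((j : ℕ) : ℤ))))
    (x : ℂ) (hx : x ≠ 0)
    (ptil : ℤ → ℂ)
    (hptil : ∀ l : ℤ, ptil l =
      ∑ j ∈ Finset.range (l.toNat + 1), x ^ (-(j : ℤ)) * p (l - (j : ℤ)))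
    (phat : ℤ → ℂ)
    (hphat : ∀ l : ℤ, phat l = p l - x⁻¹ * p (l - 1)) :
    (∑ i ∈ Finset.range (m + 1),
        s (n + 1) (fun j => if (j : ℕ) < n then (m : ℤ) else (i : ℤ)) * x ^ i) =
      x ^ m * Matrix.det (Matrix.of fun i j : Fin (n + 1) =>
        ptil ((m : ℤ) - ((i : ℕ) : ℤ) + ((j : ℕ) : ℤ))) ∧
    (∑ i ∈ Finset.range (n + 1),
        (-1) ^ i * s n (fun j => if (j : ℕ) < i then (m : ℤ) + 1 else (m : ℤ)) * x ^ i) =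
      (-x) ^ n * Matrix.det (Matrix.of fun i j : Fin n =>
        phat ((m : ℤ) + 1 - ((i : ℕ) : ℤ) + ((j : ℕ) : ℤ))) := by
  have hs' : ∀ (l : ℕ) (lam : Fin l → ℤ), s l lam = (jacobiTrudi p lam).det := hs
  simp only [hs']
  exact ⟨sum_det_jacobiTrudi_mul_pow hp hx hptil m n,
    sum_neg_one_pow_mul_det_jacobiTrudi hx hphat m n⟩
end

section
/- Let N ∈ ℕ, let q ∈ ℂ with 0 < |q| < 1, let a_1,…,a_{N+1}, b_1,…,b_{N+1} ∈ ℂ, and let x ∈ ℂ satisfy |a_s x| < 1 and |b_s x| < 1 for all s = 1,…,N+1. Then the convergent infinite product ∏_{s=1}^{N+1} ∏_{n=0}^{∞} (1 − a_s q^n x)/(1 − b_s q^n x) equals exp( ∑_{k=1}^{∞} ( ∑_{s=1}^{N+1} (b_s^k − a_s^k) ) x^k / ( k (1 − q^k) ) ), where the series converges absolutely. -/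
/-!
Expanding `log (1 - c q^n) = -∑_k (c q^n)^(k+1)/(k+1)` gives a double series that converges
absolutely for `‖c‖, ‖q‖ < 1`. Summing it over `n` first instead, each column is geometric in
`q^(k+1)`, so `∑_n log (1 - c q^n) = -∑_k c^(k+1)/((k+1)(1 - q^(k+1)))`. Exponentiating the
difference of two such series gives each ratio of infinite products, and the finite product over
`s` turns into the exponential of a finite sum of these series.
-/

open Complex

noncomputable def qLogTerm (q c : ℂ) (k : ℕ) : ℂ :=
  c ^ (k + 1) / (((k : ℂ) + 1) * (1 - q ^ (k + 1)))

section

variable {q c : ℂ}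

lemma norm_mul_pow_lt_one (hq : ‖q‖ < 1) (hc : ‖c‖ < 1) (n : ℕ) : ‖c * q ^ n‖ < 1 := by
  rw [norm_mul, norm_pow]
  exact mul_lt_one_of_nonneg_of_lt_one_left (norm_nonneg c) hc
    (pow_le_one₀ (norm_nonneg q) hq.le)

lemma one_le_norm_natCast_add_one (k : ℕ) : 1 ≤ ‖(k : ℂ) + 1‖ := by
  have : ‖(k : ℂ) + 1‖ = k + 1 := by exact_mod_cast Complex.norm_natCast (k + 1)
  rw [this]
  exact le_add_of_nonneg_left k.cast_nonneg

lemma summable_norm_qLogTerm (hq : ‖q‖ < 1) (hc : ‖c‖ < 1) :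
    Summable fun k => ‖qLogTerm q c k‖ := by
  have hgeom : Summable fun k : ℕ => ‖c‖ ^ (k + 1) / (1 - ‖q‖) :=
    ((summable_geometric_of_lt_one (norm_nonneg c) hc).comp_injective
      (add_left_injective 1)).div_const _
  refine hgeom.of_nonneg_of_le (fun _ => norm_nonneg _) fun k => ?_
  have hden : 1 - ‖q‖ ≤ ‖1 - q ^ (k + 1)‖ := calc
    1 - ‖q‖ ≤ 1 - ‖q‖ ^ (k + 1) := by
      gcongr; exact pow_le_of_le_one (norm_nonneg q) hq.le k.succ_ne_zero
    _ = ‖(1 : ℂ)‖ - ‖q ^ (k + 1)‖ := by rw [norm_one, norm_pow]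
    _ ≤ ‖1 - q ^ (k + 1)‖ := norm_sub_norm_le _ _
  rw [qLogTerm, norm_div, norm_mul, norm_pow]
  gcongr
  simpa using mul_le_mul (one_le_norm_natCast_add_one k) hden (by linarith) (norm_nonneg _)

lemma summable_mul_pow_pow_succ_div_succ (hq : ‖q‖ < 1) (hc : ‖c‖ < 1) :
    Summable fun p : ℕ × ℕ => (c * q ^ p.1) ^ (p.2 + 1) / ((p.2 : ℂ) + 1) := by
  have hmajor : Summable fun p : ℕ × ℕ => ‖q‖ ^ p.1 * ‖c‖ ^ p.2 :=
    (summable_geometric_of_lt_one (norm_nonneg q) hq).mul_of_nonneg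
      (summable_geometric_of_lt_one (norm_nonneg c) hc)
      (fun n => pow_nonneg (norm_nonneg q) n) (fun k => pow_nonneg (norm_nonneg c) k)
  refine Summable.of_norm_bounded hmajor fun ⟨n, k⟩ => ?_
  have hqn : (‖q‖ ^ n) ^ (k + 1) ≤ ‖q‖ ^ n :=
    pow_le_of_le_one (by positivity) (pow_le_one₀ (norm_nonneg q) hq.le) k.succ_ne_zero
  calc ‖(c * q ^ n) ^ (k + 1) / ((k : ℂ) + 1)‖
      ≤ ‖c * q ^ n‖ ^ (k + 1) := by
        rw [norm_div, norm_pow]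
        exact div_le_self (by positivity) (one_le_norm_natCast_add_one k)
    _ = ‖c‖ ^ (k + 1) * (‖q‖ ^ n) ^ (k + 1) := by rw [norm_mul, norm_pow, mul_pow]
    _ ≤ ‖c‖ ^ k * ‖q‖ ^ n :=
        mul_le_mul (pow_le_pow_of_le_one (norm_nonneg c) hc.le k.le_succ) hqn
          (by positivity) (by positivity)
    _ = ‖q‖ ^ n * ‖c‖ ^ k := mul_comm _ _

lemma hasSum_qLogTerm (hq : ‖q‖ < 1) (k : ℕ) :
    HasSum (fun n : ℕ => (c * q ^ n) ^ (k + 1) / ((k : ℂ) + 1)) (qLogTerm q c k) := by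
  have hqk : ‖q ^ (k + 1)‖ < 1 := by
    rw [norm_pow]; exact pow_lt_one₀ (norm_nonneg q) hq k.succ_ne_zero
  rw [qLogTerm, div_mul_eq_div_div, div_eq_mul_inv _ (1 - _)]
  refine ((hasSum_geometric_of_norm_lt_one hqk).mul_left _).congr_fun fun n => ?_
  rw [mul_pow, ← pow_mul, ← pow_mul, mul_comm n]
  ring

lemma hasSum_log_one_sub_mul_pow (hq : ‖q‖ < 1) (hc : ‖c‖ < 1) :
    HasSum (fun n : ℕ => log (1 - c * q ^ n)) (-∑' k, qLogTerm q c k) := by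
  obtain ⟨S, hS⟩ := summable_mul_pow_pow_succ_div_succ hq hc
  have hrow (n : ℕ) : HasSum (fun k : ℕ => (c * q ^ n) ^ (k + 1) / ((k : ℂ) + 1))
      (-log (1 - c * q ^ n)) :=
    hasSum_taylorSeries_neg_log' (norm_mul_pow_lt_one hq hc n)
  have hswap : HasSum (fun p : ℕ × ℕ => (c * q ^ p.2) ^ (p.1 + 1) / ((p.1 : ℂ) + 1)) S :=
    (Equiv.prodComm ℕ ℕ).hasSum_iff.mpr hS
  have hcols : HasSum (qLogTerm q c) S := hswap.prod_fiberwise (hasSum_qLogTerm hq)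
  rw [hcols.tsum_eq]
  simpa only [neg_neg] using (hS.prod_fiberwise hrow).neg

lemma one_sub_ne_zero_of_norm_lt_one {z : ℂ} (hz : ‖z‖ < 1) : 1 - z ≠ 0 :=
  sub_ne_zero.mpr fun h => by simp [← h] at hz

lemma hasProd_one_sub_div_one_sub {d : ℂ} (hq : ‖q‖ < 1) (hc : ‖c‖ < 1) (hd : ‖d‖ < 1) :
    HasProd (fun n : ℕ => (1 - c * q ^ n) / (1 - d * q ^ n))
      (exp (∑' k, (qLogTerm q d k - qLogTerm q c k))) := by
  -- `exp (log u - log v) = u / v` needs no branch-cut bookkeeping, unlike `log (u / v)`.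
  have hlog := (hasSum_log_one_sub_mul_pow hq hc).sub (hasSum_log_one_sub_mul_pow hq hd)
  convert hlog.cexp using 1
  · ext n
    rw [Function.comp_apply, exp_sub,
      exp_log (one_sub_ne_zero_of_norm_lt_one (norm_mul_pow_lt_one hq hc n)),
      exp_log (one_sub_ne_zero_of_norm_lt_one (norm_mul_pow_lt_one hq hd n))]
  · rw [(summable_norm_qLogTerm hq hd).of_norm.tsum_sub (summable_norm_qLogTerm hq hc).of_norm]
    congr 1
    ring

end

theorem qPochhammer_ratio_prod_eq_exp_general
    (N : ℕ) (q : ℂ) (hq1 : ‖q‖ < 1)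
    (a b : Fin (N + 1) → ℂ) (x : ℂ)
    (ha : ∀ s, ‖a s * x‖ < 1) (hb : ∀ s, ‖b s * x‖ < 1) :
    (∀ s, Multipliable fun n : ℕ => (1 - a s * q ^ n * x) / (1 - b s * q ^ n * x)) ∧
    Summable (fun k : ℕ =>
      ‖(∑ s, (b s ^ (k + 1) - a s ^ (k + 1))) * x ^ (k + 1) /
        (((k : ℂ) + 1) * (1 - q ^ (k + 1)))‖) ∧
    (∏ s, ∏' n : ℕ, (1 - a s * q ^ n * x) / (1 - b s * q ^ n * x)) =
      Complex.exp (∑' k : ℕ,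
        (∑ s, (b s ^ (k + 1) - a s ^ (k + 1))) * x ^ (k + 1) /
          (((k : ℂ) + 1) * (1 - q ^ (k + 1)))) := by
  set t : Fin (N + 1) → ℕ → ℂ := fun s k => qLogTerm q (b s * x) k - qLogTerm q (a s * x) k
  have hterm (k : ℕ) : (∑ s, (b s ^ (k + 1) - a s ^ (k + 1))) * x ^ (k + 1) /
      (((k : ℂ) + 1) * (1 - q ^ (k + 1))) = ∑ s, t s k := by
    simp only [t, qLogTerm, Finset.sum_mul, Finset.sum_div, sub_mul, mul_pow, sub_div]
  have hprod (s : Fin (N + 1)) :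
      HasProd (fun n : ℕ => (1 - a s * q ^ n * x) / (1 - b s * q ^ n * x))
        (exp (∑' k, t s k)) := by
    simpa only [mul_right_comm] using hasProd_one_sub_div_one_sub hq1 (ha s) (hb s)
  have hsummable (s : Fin (N + 1)) : Summable fun k => ‖t s k‖ :=
    ((summable_norm_qLogTerm hq1 (hb s)).add (summable_norm_qLogTerm hq1 (ha s))).of_nonneg_of_le
      (fun _ => norm_nonneg _) fun _ => norm_sub_le _ _
  simp only [hterm]
  refine ⟨fun s => (hprod s).multipliable, ?_, ?_⟩
  · exact (summable_sum fun s _ => hsummable s).of_nonneg_of_le (fun _ => norm_nonneg _)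
      fun k => norm_sum_le _ _
  · rw [Summable.tsum_finsetSum fun s _ => (hsummable s).of_norm, exp_sum]
    exact Finset.prod_congr rfl fun s _ => (hprod s).tprod_eq

/-- the product formula `∏_s (a_s x;q)_∞/(b_s x;q)_∞ = exp(∑_k ∑_s (b_s^k-a_s^k)x^k/(k(1-q^k)))`. -/
theorem qPochhammer_ratio_prod_eq_exp
    (N : ℕ) (q : ℂ) (hq0 : 0 < ‖q‖) (hq1 : ‖q‖ < 1)
    (a b : Fin (N + 1) → ℂ) (x : ℂ)
    (ha : ∀ s, ‖a s * x‖ < 1) (hb : ∀ s, ‖b s * x‖ < 1) :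
    (∀ s, Multipliable fun n : ℕ => (1 - a s * q ^ n * x) / (1 - b s * q ^ n * x)) ∧
    Summable (fun k : ℕ =>
      ‖(∑ s, (b s ^ (k + 1) - a s ^ (k + 1))) * x ^ (k + 1) /
        (((k : ℂ) + 1) * (1 - q ^ (k + 1)))‖) ∧
    (∏ s, ∏' n : ℕ, (1 - a s * q ^ n * x) / (1 - b s * q ^ n * x)) =
      Complex.exp (∑' k : ℕ,
        (∑ s, (b s ^ (k + 1) - a s ^ (k + 1))) * x ^ (k + 1) /
          (((k : ℂ) + 1) * (1 - q ^ (k + 1)))) :=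
  qPochhammer_ratio_prod_eq_exp_general N q hq1 a b x ha hb
end

section
/- Let q ∈ ℂ with 0 < |q| < 1, let a_1, a_2, a_3, b_1, b_2, b_3 ∈ ℂ with b_1, b_2, a_3, b_3 ≠ 0, and let k ∈ ℕ. Assume (q^{−k+1} b_3/a_3; q)_j ≠ 0 for all 0 ≤ j ≤ k. Then the coefficient p_k in the power series expansion ∏_{i=1}^{3} (a_i x; q)_∞/(b_i x; q)_∞ = ∑_{k≥0} p_k x^k (valid for |x| < min_i 1/|b_i|) is given by the terminating q-Appell Lauricella expression p_k = b_3^k (a_3/b_3; q)_k / (q; q)_k · ∑_{m_1, m_2 ≥ 0, m_1+m_2 ≤ k} [ (q^{−k}; q)_{m_1+m_2} (a_1/b_1; q)_{m_1} (a_2/b_2; q)_{m_2} / ( (q^{−k+1} b_3/a_3; q)_{m_1+m_2} (q; q)_{m_1} (q; q)_{m_2} ) ] (q b_1/a_3)^{m_1} (q b_2/a_3)^{m_2}. -/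
/-!
Each quotient `(a x;q)_∞ / (b x;q)_∞` is the sum of the q-binomial series
`G(x) = ∑ₖ (a/b;q)ₖ bᵏ xᵏ / (q;q)ₖ`. Indeed the recursion of the coefficients gives
`(1 - b x) G(x) = (1 - a x) G(q x)`; iterating it `N` times and letting `N → ∞`, where
`G(qᴺ x) → G(0) = 1`, yields `G(x) (b x;q)_∞ = (a x;q)_∞`. Multiplying the three absolutely
convergent series with coefficients `cᵢ` gives `p_k = ∑_{m₁+m₂ ≤ k} c₁(m₁) c₂(m₂) c₃(k-m₁-m₂)`.
Finally `c₃(k-m)` is expressed through `c₃(k)` by reversing the order of the last `m` factors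
of `(a₃/b₃;q)_k` and `(q;q)_k`, which produces `(q^{1-k} b₃/a₃;q)_m` and `(q^{-k};q)_m`.
-/

open Filter Topology Finset

section CommRing

variable {R : Type*} [CommRing R] {q c : R}

def qPoch (q c : R) (n : ℕ) : R := ∏ i ∈ range n, (1 - c * q ^ i)

@[simp] lemma qPoch_zero (q c : R) : qPoch q c 0 = 1 := prod_range_zero _

lemma qPoch_succ (q c : R) (n : ℕ) : qPoch q c (n + 1) = qPoch q c n * (1 - c * q ^ n) :=
  prod_range_succ _ _

lemma qPoch_ne_zero_of_le {n m : ℕ} (h : qPoch q c n ≠ 0) (hm : m ≤ n) : qPoch q c m ≠ 0 := by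
  rw [qPoch, ← prod_range_mul_prod_Ico _ hm] at h
  exact left_ne_zero_of_mul h

end CommRing

section Field

variable {K : Type*} [Field K] {q c d : K}

-- Reversing the last `m` factors: `1 - c q^(n-1-j) = -c q^(n-1) q^(-j) (1 - d q^j)`.
lemma qPoch_mul_pow_choose_two (hq : q ≠ 0) {n m : ℕ} (hcd : c * d = q ^ (1 - (n : ℤ)))
    (hm : m ≤ n) :
    qPoch q c n * q ^ m.choose 2 = qPoch q c (n - m) * qPoch q d m * (-c * q ^ (n - 1)) ^ m := by
  induction m with
  | zero => simp
  | succ m ih =>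
    have hcdq : c * d * q ^ (n - 1) = 1 := by
      rw [hcd, ← zpow_natCast, ← zpow_add₀ hq, Nat.cast_sub (by omega)]
      simp
    have hpow : q ^ m * q ^ (n - (m + 1)) = q ^ (n - 1) := by
      rw [← pow_add]; congr 1; omega
    have hsplit : qPoch q c (n - m) = qPoch q c (n - (m + 1)) * (1 - c * q ^ (n - (m + 1))) := by
      rw [← qPoch_succ]; congr 1; omega
    have ih := ih (by omega)
    rw [hsplit] at ih
    rw [Nat.choose_succ_succ', Nat.choose_one_right, pow_add, qPoch_succ, pow_succ]
    linear_combination q ^ m * ih - (qPoch q c (n - (m + 1)) * qPoch q d m *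
      (-c * q ^ (n - 1)) ^ m) * (c * hpow + q ^ m * hcdq)

-- The coefficient `bᵏ (a/b;q)ₖ / (q;q)ₖ` of the q-binomial series, written so that it makes
-- sense for `b = 0` too.
def qBinomialSeriesCoeff (q a b : K) (k : ℕ) : K := (∏ i ∈ range k, (b - a * q ^ i)) / qPoch q q k

lemma qBinomialSeriesCoeff_eq {a b : K} (hb : b ≠ 0) (k : ℕ) :
    qBinomialSeriesCoeff q a b k = b ^ k * qPoch q (a / b) k / qPoch q q k := by
  have hbk : b ^ k = ∏ _i ∈ range k, b := by simp
  rw [qBinomialSeriesCoeff, hbk, qPoch, qPoch, ← prod_mul_distrib]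
  congr 1
  refine prod_congr rfl fun i _ => ?_
  field_simp

lemma qBinomialSeriesCoeff_succ {a b : K} {k : ℕ} (hk : qPoch q q (k + 1) ≠ 0) :
    qBinomialSeriesCoeff q a b (k + 1) * (1 - q ^ (k + 1)) =
      (b - a * q ^ k) * qBinomialSeriesCoeff q a b k := by
  rw [qPoch_succ, ← pow_succ'] at hk
  rw [qBinomialSeriesCoeff, qBinomialSeriesCoeff, prod_range_succ, qPoch_succ, ← pow_succ']
  field_simp [left_ne_zero_of_mul hk, right_ne_zero_of_mul hk]

lemma qBinomialSeriesCoeff_mul_eq_sub {a b : K} (hq : q ≠ 0) (ha : a ≠ 0) (hb : b ≠ 0) {k m : ℕ}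
    (hqk : qPoch q q k ≠ 0) (hd : qPoch q (q ^ (1 - (k : ℤ)) * b / a) m ≠ 0) (hm : m ≤ k) :
    qBinomialSeriesCoeff q a b k *
        (qPoch q (q ^ (-(k : ℤ))) m * q ^ m / (qPoch q (q ^ (1 - (k : ℤ)) * b / a) m * a ^ m)) =
      qBinomialSeriesCoeff q a b (k - m) := by
  set d := q ^ (1 - (k : ℤ)) * b / a
  have h1 := qPoch_mul_pow_choose_two hq (c := q) (d := q ^ (-(k : ℤ))) (by
    rw [← zpow_one_add₀ hq]; ring_nf) hm
  have h2 := qPoch_mul_pow_choose_two hq (c := a / b) (d := d) (by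
    simp only [d]; field_simp) hm
  have hA : (b * (a / b)) ^ m = a ^ m := by rw [mul_div_cancel₀ _ hb]
  have hbk : b ^ k = b ^ (k - m) * b ^ m := by rw [← pow_add, Nat.sub_add_cancel hm]
  rw [qBinomialSeriesCoeff_eq hb, qBinomialSeriesCoeff_eq hb, mul_div_assoc', div_mul_eq_mul_div,
    div_div, div_eq_div_iff (by simp [*]) (qPoch_ne_zero_of_le hqk (Nat.sub_le k m))]
  -- After multiplying by `q ^ m.choose 2`, the reversal formula for `(q;q)ₖ` and `(a/b;q)ₖ`
  -- turns both sides into the same product.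
  refine mul_right_cancel₀ (pow_ne_zero (m.choose 2) hq) ?_
  linear_combination (b ^ k * qPoch q (q ^ (-(k : ℤ))) m * q ^ m * qPoch q q (k - m)) * h2
    - (b ^ (k - m) * qPoch q (a / b) (k - m) * qPoch q d m * a ^ m) * h1
    + qPoch q (q ^ (-(k : ℤ))) m * qPoch q q (k - m) * qPoch q (a / b) (k - m) * qPoch q d m *
      (-q ^ (k - 1)) ^ m * q ^ m * (b ^ (k - m) * hA + (a / b) ^ m * hbk)

lemma qAppellLauricella_term_eq {a1 a2 a3 b1 b2 b3 : K} (hq : q ≠ 0) (hb1 : b1 ≠ 0) (hb2 : b2 ≠ 0)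
    (ha3 : a3 ≠ 0) (hb3 : b3 ≠ 0) {k m1 m2 : ℕ} (hqk : qPoch q q k ≠ 0)
    (hd : qPoch q (q ^ (1 - (k : ℤ)) * b3 / a3) (m1 + m2) ≠ 0) (hm : m1 + m2 ≤ k) :
    b3 ^ k * qPoch q (a3 / b3) k / qPoch q q k *
        (qPoch q (q ^ (-(k : ℤ))) (m1 + m2) * qPoch q (a1 / b1) m1 * qPoch q (a2 / b2) m2 /
            (qPoch q (q ^ (1 - (k : ℤ)) * b3 / a3) (m1 + m2) * qPoch q q m1 * qPoch q q m2) *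
          (q * b1 / a3) ^ m1 * (q * b2 / a3) ^ m2) =
      qBinomialSeriesCoeff q a1 b1 m1 * qBinomialSeriesCoeff q a2 b2 m2 *
        qBinomialSeriesCoeff q a3 b3 (k - (m1 + m2)) := by
  have hq1 := qPoch_ne_zero_of_le hqk (m := m1) (by omega)
  have hq2 := qPoch_ne_zero_of_le hqk (m := m2) (by omega)
  rw [← qBinomialSeriesCoeff_mul_eq_sub hq ha3 hb3 hqk hd hm, qBinomialSeriesCoeff_eq hb1,
    qBinomialSeriesCoeff_eq hb2, qBinomialSeriesCoeff_eq hb3, pow_add q, pow_add a3,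
    div_pow, div_pow, mul_pow, mul_pow]
  field_simp

end Field

section PowerSeries

variable {𝕜 : Type*} [NontriviallyNormedField 𝕜]

lemma hasFPowerSeriesAt_ofScalars_of_hasSum {c : ℕ → 𝕜} {f : 𝕜 → 𝕜} {r : ℝ} (hr : 0 < r)
    (hf : ∀ x : 𝕜, ‖x‖ < r → HasSum (fun n => c n * x ^ n) (f x)) :
    HasFPowerSeriesAt f (FormalMultilinearSeries.ofScalars 𝕜 c) 0 := by
  obtain ⟨x₀, hx₀, hx₀r⟩ := NormedField.exists_norm_lt 𝕜 hr
  have hterms : Tendsto (fun n => ‖FormalMultilinearSeries.ofScalars 𝕜 c n‖ * (‖x₀‖₊ : ℝ) ^ n)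
      atTop (𝓝 0) := by
    simpa [FormalMultilinearSeries.ofScalars_norm, norm_mul, norm_pow] using
      (hf x₀ hx₀r).summable.tendsto_atTop_zero.norm
  refine ⟨‖x₀‖₊, FormalMultilinearSeries.le_radius_of_tendsto _ hterms, by simpa using hx₀,
    fun {y} hy => ?_⟩
  rw [Metric.eball_coe, mem_ball_zero_iff] at hy
  simpa [FormalMultilinearSeries.ofScalars_apply_eq, mul_comm] using hf y (hy.trans hx₀r)

lemma eq_of_hasSum_mul_pow {c d : ℕ → 𝕜} {f : 𝕜 → 𝕜} {r : ℝ} (hr : 0 < r)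
    (hc : ∀ x : 𝕜, ‖x‖ < r → HasSum (fun n => c n * x ^ n) (f x))
    (hd : ∀ x : 𝕜, ‖x‖ < r → HasSum (fun n => d n * x ^ n) (f x)) : c = d :=
  FormalMultilinearSeries.ofScalars_series_injective 𝕜 𝕜 <|
    (hasFPowerSeriesAt_ofScalars_of_hasSum hr hc).eq_formalMultilinearSeries
      (hasFPowerSeriesAt_ofScalars_of_hasSum hr hd)

end PowerSeries

section CauchyProduct

lemma sum_range_mul_pow_mul_mul_pow {R : Type*} [CommSemiring R] (c d : ℕ → R) (x : R) (n : ℕ) :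
    ∑ i ∈ range (n + 1), c i * x ^ i * (d (n - i) * x ^ (n - i)) =
      (∑ i ∈ range (n + 1), c i * d (n - i)) * x ^ n := by
  rw [sum_mul]
  refine sum_congr rfl fun i hi => ?_
  rw [← pow_mul_pow_sub x (mem_range_succ_iff.1 hi)]
  ring

variable {R : Type*} [NormedCommRing R] {c d : ℕ → R} {x : R}

lemma summable_norm_sum_range_mul_mul_pow (hc : Summable fun n => ‖c n * x ^ n‖)
    (hd : Summable fun n => ‖d n * x ^ n‖) :
    Summable fun n => ‖(∑ i ∈ range (n + 1), c i * d (n - i)) * x ^ n‖ := by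
  simpa only [sum_range_mul_pow_mul_mul_pow] using
    summable_norm_sum_mul_range_of_summable_norm hc hd

lemma hasSum_sum_range_mul_mul_pow [CompleteSpace R] (hc : Summable fun n => ‖c n * x ^ n‖)
    (hd : Summable fun n => ‖d n * x ^ n‖) :
    HasSum (fun n => (∑ i ∈ range (n + 1), c i * d (n - i)) * x ^ n)
      ((∑' n, c n * x ^ n) * ∑' n, d n * x ^ n) := by
  simpa only [sum_range_mul_pow_mul_mul_pow] using hasSum_sum_range_mul_of_summable_norm hc hd

end CauchyProduct

section QBinomial

variable {𝕜 : Type*} [NontriviallyNormedField 𝕜] {q a b x : 𝕜}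

lemma one_sub_ne_zero_of_norm_lt_one_s4 {u : 𝕜} (hu : ‖u‖ < 1) : 1 - u ≠ 0 := by
  rw [sub_ne_zero]
  rintro rfl
  simp at hu

lemma norm_mul_pow_mul_le (hq : ‖q‖ < 1) (c x : 𝕜) (n : ℕ) : ‖c * q ^ n * x‖ ≤ ‖c * x‖ := by
  rw [mul_right_comm, norm_mul _ (q ^ n), norm_pow]
  exact mul_le_of_le_one_right (norm_nonneg _) (pow_le_one₀ (norm_nonneg _) hq.le)

lemma one_sub_mul_pow_ne_zero (hq : ‖q‖ < 1) (n : ℕ) : 1 - q * q ^ n ≠ 0 :=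
  one_sub_ne_zero_of_norm_lt_one_s4 <| by
    simpa using (norm_mul_pow_mul_le hq q 1 n).trans_lt (by simpa using hq)

lemma qPoch_self_ne_zero (hq : ‖q‖ < 1) (n : ℕ) : qPoch q q n ≠ 0 :=
  prod_ne_zero_iff.2 fun i _ => one_sub_mul_pow_ne_zero hq i

lemma summable_norm_qBinomialSeriesCoeff_mul_pow (hq : ‖q‖ < 1) (hx : ‖b * x‖ < 1) :
    Summable fun k => ‖qBinomialSeriesCoeff q a b k * x ^ k‖ := by
  obtain ⟨r, hbr, hr⟩ := exists_between hx
  have hqk := tendsto_pow_atTop_nhds_zero_of_norm_lt_one hq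
  have hratio : Tendsto (fun k => ‖(b - a * q ^ k) * x / (1 - q * q ^ k)‖) atTop (𝓝 ‖b * x‖) := by
    simpa using ((((tendsto_const_nhds (x := b)).sub (hqk.const_mul a)).mul_const x).div
      ((tendsto_const_nhds (x := (1 : 𝕜))).sub (hqk.const_mul q)) (by simp)).norm
  refine summable_of_ratio_norm_eventually_le hr ?_
  filter_upwards [hratio.eventually_le_const hbr] with k hk
  have hsucc : qBinomialSeriesCoeff q a b (k + 1) * x ^ (k + 1) =
      (b - a * q ^ k) * x / (1 - q * q ^ k) * (qBinomialSeriesCoeff q a b k * x ^ k) := by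
    have h := qBinomialSeriesCoeff_succ (a := a) (b := b) (qPoch_self_ne_zero hq (k + 1))
    rw [pow_succ'] at h ⊢
    rw [div_mul_eq_mul_div, eq_div_iff (one_sub_mul_pow_ne_zero hq k)]
    linear_combination x * x ^ k * h
  rw [norm_norm, norm_norm, hsucc, norm_mul]
  exact mul_le_mul_of_nonneg_right hk (norm_nonneg _)

lemma summable_norm_mul_pow_mul (hq : ‖q‖ < 1) (c x : 𝕜) : Summable fun n => ‖c * q ^ n * x‖ := by
  refine ((summable_geometric_of_lt_one (norm_nonneg _) hq).mul_left ‖c * x‖).congr fun n => ?_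
  rw [mul_right_comm, norm_mul _ (q ^ n), norm_pow, mul_comm]

noncomputable def qBinomialSeries (q a b x : 𝕜) : 𝕜 := ∑' k, qBinomialSeriesCoeff q a b k * x ^ k

lemma qBinomialSeries_zero (q a b : 𝕜) : qBinomialSeries q a b 0 = 1 := by
  rw [qBinomialSeries, tsum_eq_single 0 fun k hk => by simp [hk]]
  simp [qBinomialSeriesCoeff]

variable [CompleteSpace 𝕜]

lemma multipliable_one_sub_mul_pow_mul (hq : ‖q‖ < 1) (c x : 𝕜) :
    Multipliable fun n => 1 - c * q ^ n * x := by
  simpa [sub_eq_add_neg] using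
    multipliable_one_add_of_summable (f := fun n => -(c * q ^ n * x))
      (by simpa using summable_norm_mul_pow_mul hq c x)

lemma tprod_one_sub_mul_pow_mul_ne_zero (hq : ‖q‖ < 1) {c x : 𝕜} (hx : ‖c * x‖ < 1) :
    ∏' n, (1 - c * q ^ n * x) ≠ 0 := by
  simpa [sub_eq_add_neg] using
    tprod_one_add_ne_zero_of_summable (f := fun n => -(c * q ^ n * x))
      (fun n => by simpa [← sub_eq_add_neg] using
        one_sub_ne_zero_of_norm_lt_one_s4 ((norm_mul_pow_mul_le hq c x n).trans_lt hx))
      (by simpa using summable_norm_mul_pow_mul hq c x)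

lemma hasSum_qBinomialSeries (hq : ‖q‖ < 1) (hx : ‖b * x‖ < 1) :
    HasSum (fun k => qBinomialSeriesCoeff q a b k * x ^ k) (qBinomialSeries q a b x) :=
  (summable_norm_qBinomialSeriesCoeff_mul_pow hq hx).of_norm.hasSum

lemma qBinomialSeries_functional_eq (hq : ‖q‖ < 1) (hx : ‖b * x‖ < 1) :
    (1 - b * x) * qBinomialSeries q a b x = (1 - a * x) * qBinomialSeries q a b (q * x) := by
  have hqx : ‖b * (q * x)‖ < 1 := by
    simpa [mul_assoc] using (norm_mul_pow_mul_le hq b x 1).trans_lt hx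
  have hG := hasSum_qBinomialSeries (a := a) hq hx
  have hGq := hasSum_qBinomialSeries (a := a) hq hqx
  -- `G(x) - G(qx) = ∑ₙ cₙ₊₁ (1 - qⁿ⁺¹) xⁿ⁺¹ = b x G(x) - a x G(qx)` by the coefficient recursion.
  have hdiff := (hasSum_nat_add_iff' 1).2 (hG.sub hGq)
  simp only [range_one, sum_singleton, pow_zero, sub_self, sub_zero] at hdiff
  have hterm (n : ℕ) :
      qBinomialSeriesCoeff q a b (n + 1) * x ^ (n + 1) -
          qBinomialSeriesCoeff q a b (n + 1) * (q * x) ^ (n + 1) =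
        b * x * (qBinomialSeriesCoeff q a b n * x ^ n) -
          a * x * (qBinomialSeriesCoeff q a b n * (q * x) ^ n) := by
    linear_combination x ^ (n + 1) * qBinomialSeriesCoeff_succ (a := a) (b := b)
      (qPoch_self_ne_zero hq (n + 1))
  linear_combination
    hdiff.unique (((hG.mul_left (b * x)).sub (hGq.mul_left (a * x))).congr_fun hterm)

lemma qBinomialSeries_mul_prod_range (hq : ‖q‖ < 1) (hx : ‖b * x‖ < 1) (N : ℕ) :
    qBinomialSeries q a b x * ∏ n ∈ range N, (1 - b * q ^ n * x) =
      qBinomialSeries q a b (q ^ N * x) * ∏ n ∈ range N, (1 - a * q ^ n * x) := by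
  induction N with
  | zero => simp
  | succ N ih =>
    have hN : ‖b * (q ^ N * x)‖ < 1 := by
      simpa [mul_assoc] using (norm_mul_pow_mul_le hq b x N).trans_lt hx
    rw [prod_range_succ, prod_range_succ, ← mul_assoc, ih, pow_succ', mul_assoc q]
    linear_combination (∏ n ∈ range N, (1 - a * q ^ n * x)) *
      qBinomialSeries_functional_eq (a := a) hq hN

lemma tendsto_qBinomialSeries_pow_mul (hq : ‖q‖ < 1) (a b x : 𝕜) :
    Tendsto (fun N : ℕ => qBinomialSeries q a b (q ^ N * x)) atTop (𝓝 1) := by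
  have hG : HasFPowerSeriesAt (qBinomialSeries q a b)
      (FormalMultilinearSeries.ofScalars 𝕜 (qBinomialSeriesCoeff q a b)) 0 := by
    refine hasFPowerSeriesAt_ofScalars_of_hasSum (r := (‖b‖ + 1)⁻¹) (by positivity)
      fun y hy => hasSum_qBinomialSeries hq ?_
    calc ‖b * y‖ ≤ (‖b‖ + 1) * ‖y‖ := by rw [norm_mul]; gcongr; linarith
      _ < (‖b‖ + 1) * (‖b‖ + 1)⁻¹ := by gcongr
      _ = 1 := mul_inv_cancel₀ (by positivity)
  have hlim : Tendsto (fun N : ℕ => q ^ N * x) atTop (𝓝 0) := by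
    simpa using (tendsto_pow_atTop_nhds_zero_of_norm_lt_one hq).mul_const x
  rw [← qBinomialSeries_zero q a b]
  exact hG.continuousAt.tendsto.comp hlim

theorem qBinomialSeries_mul_tprod (hq : ‖q‖ < 1) (hx : ‖b * x‖ < 1) :
    qBinomialSeries q a b x * ∏' n, (1 - b * q ^ n * x) = ∏' n, (1 - a * q ^ n * x) := by
  have hb := (multipliable_one_sub_mul_pow_mul hq b x).hasProd.tendsto_prod_nat.const_mul
    (qBinomialSeries q a b x)
  have ha := (tendsto_qBinomialSeries_pow_mul hq a b x).mul
    (multipliable_one_sub_mul_pow_mul hq a x).hasProd.tendsto_prod_nat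
  simp only [qBinomialSeries_mul_prod_range hq hx, one_mul] at hb ha
  exact tendsto_nhds_unique hb ha

theorem qBinomialSeries_eq_div (hq : ‖q‖ < 1) (hx : ‖b * x‖ < 1) :
    qBinomialSeries q a b x = (∏' n, (1 - a * q ^ n * x)) / ∏' n, (1 - b * q ^ n * x) :=
  eq_div_of_mul_eq (tprod_one_sub_mul_pow_mul_ne_zero hq hx) (qBinomialSeries_mul_tprod hq hx)

theorem hasSum_qBinomialSeries_mul_mul (hq : ‖q‖ < 1) {a₁ a₂ a₃ b₁ b₂ b₃ : 𝕜}
    (h₁ : ‖b₁ * x‖ < 1) (h₂ : ‖b₂ * x‖ < 1) (h₃ : ‖b₃ * x‖ < 1) :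
    HasSum (fun n => (∑ i ∈ range (n + 1), qBinomialSeriesCoeff q a₁ b₁ i *
        ∑ j ∈ range (n - i + 1), qBinomialSeriesCoeff q a₂ b₂ j *
          qBinomialSeriesCoeff q a₃ b₃ (n - i - j)) * x ^ n)
      (((∏' n, (1 - a₁ * q ^ n * x)) * (∏' n, (1 - a₂ * q ^ n * x)) *
          (∏' n, (1 - a₃ * q ^ n * x))) /
        ((∏' n, (1 - b₁ * q ^ n * x)) * (∏' n, (1 - b₂ * q ^ n * x)) *
          (∏' n, (1 - b₃ * q ^ n * x)))) := by
  have s₁ := summable_norm_qBinomialSeriesCoeff_mul_pow (a := a₁) hq h₁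
  have s₂ := summable_norm_qBinomialSeriesCoeff_mul_pow (a := a₂) hq h₂
  have s₃ := summable_norm_qBinomialSeriesCoeff_mul_pow (a := a₃) hq h₃
  have h := hasSum_sum_range_mul_mul_pow s₁ (summable_norm_sum_range_mul_mul_pow s₂ s₃)
  rw [(hasSum_sum_range_mul_mul_pow s₂ s₃).tsum_eq] at h
  convert h using 1
  change _ = qBinomialSeries q a₁ b₁ x * (qBinomialSeries q a₂ b₂ x * qBinomialSeries q a₃ b₃ x)
  rw [qBinomialSeries_eq_div hq h₁, qBinomialSeries_eq_div hq h₂, qBinomialSeries_eq_div hq h₃]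
  ring

end QBinomial

/-- the Taylor coefficients of `∏_{i=1}^{3}(a_i x;q)_∞/(b_i x;q)_∞` are given by
a terminating q-Appell Lauricella `φ_D^{(2)}` expression. -/
theorem coeff_E6_generating_function_eq_qAppellLauricella
    (q : ℂ) (hq0 : 0 < ‖q‖) (hq1 : ‖q‖ < 1)
    (a1 a2 a3 b1 b2 b3 : ℂ) (hb1 : b1 ≠ 0) (hb2 : b2 ≠ 0) (ha3 : a3 ≠ 0) (hb3 : b3 ≠ 0)
    (k : ℕ)
    (poch : ℂ → ℕ → ℂ)
    (hpoch : ∀ (c : ℂ) (j : ℕ), poch c j = ∏ i ∈ Finset.range j, (1 - c * q ^ i))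
    (hne : ∀ j ≤ k, poch (q ^ (1 - (k : ℤ)) * b3 / a3) j ≠ 0)
    (p : ℕ → ℂ)
    (hp : ∀ x : ℂ, ‖x‖ <
        min (min (1 / ‖b1‖) (1 / ‖b2‖)) (1 / ‖b3‖) →
      HasSum (fun j : ℕ => p j * x ^ j)
        (((∏' n : ℕ, (1 - a1 * q ^ n * x)) * (∏' n : ℕ, (1 - a2 * q ^ n * x)) *
            (∏' n : ℕ, (1 - a3 * q ^ n * x))) /
          ((∏' n : ℕ, (1 - b1 * q ^ n * x)) * (∏' n : ℕ, (1 - b2 * q ^ n * x)) *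
            (∏' n : ℕ, (1 - b3 * q ^ n * x))))) :
    p k = b3 ^ k * poch (a3 / b3) k / poch q k *
      ∑ m1 ∈ Finset.range (k + 1), ∑ m2 ∈ Finset.range (k - m1 + 1),
        poch (q ^ (-(k : ℤ))) (m1 + m2) * poch (a1 / b1) m1 * poch (a2 / b2) m2 /
            (poch (q ^ (1 - (k : ℤ)) * b3 / a3) (m1 + m2) * poch q m1 * poch q m2) *
          (q * b1 / a3) ^ m1 * (q * b2 / a3) ^ m2 := by
  obtain rfl : poch = qPoch q := funext fun c => funext (hpoch c)
  have hr : 0 < min (min (1 / ‖b1‖) (1 / ‖b2‖)) (1 / ‖b3‖) := by positivity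
  have hball {b x : ℂ} (hb : b ≠ 0) (hx : ‖x‖ < 1 / ‖b‖) : ‖b * x‖ < 1 := by
    rwa [norm_mul, ← lt_div_iff₀' (norm_pos_iff.2 hb)]
  have hcoeff := eq_of_hasSum_mul_pow hr hp fun x hx =>
    hasSum_qBinomialSeries_mul_mul hq1
      (hball hb1 (hx.trans_le ((min_le_left _ _).trans (min_le_left _ _))))
      (hball hb2 (hx.trans_le ((min_le_left _ _).trans (min_le_right _ _))))
      (hball hb3 (hx.trans_le (min_le_right _ _)))
  rw [congrFun hcoeff k, mul_sum]
  refine sum_congr rfl fun m1 hm1 => ?_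
  rw [mul_sum, mul_sum]
  refine sum_congr rfl fun m2 hm2 => ?_
  have hm : m1 + m2 ≤ k := by simp only [mem_range] at hm1 hm2; omega
  rw [qAppellLauricella_term_eq (norm_pos_iff.1 hq0) hb1 hb2 ha3 hb3 (qPoch_self_ne_zero hq1 k)
    (hne _ hm) hm, Nat.sub_sub, mul_assoc]
end

section
/- Let q ∈ ℂ with 0 < |q| < 1, let a_1, a_2, b_1 ∈ ℂ with a_2, b_1 ≠ 0, and let k ∈ ℕ. Then the coefficient p_k in the power series expansion (a_1 x, a_2 x; q)_∞/(b_1 x; q)_∞ = ∑_{k≥0} p_k x^k (valid for |x| < 1/|b_1|) is given by the terminating q-hypergeometric expression p_k = q^{k(k−1)/2} (−a_2)^k / (q; q)_k · ∑_{s=0}^{k} [ (q^{−k}; q)_s (a_1/b_1; q)_s / (q; q)_s ] (q b_1/a_2)^s. -/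
/-!
The shift `(c x; q)_∞ = (1 - c x) (c q x; q)_∞` turns the generating function `P(x) = ∑ p_k x^k`
into a solution of the q-difference equation `(1 - b₁ x) P(x) = (1 - a₁ x) (1 - a₂ x) P(q x)`.
Read coefficientwise, this equation determines a formal power series from its constant term,
since `1 - q ^ n ≠ 0`. The product of the q-binomial series of `(a₁ x; q)_∞ / (b₁ x; q)_∞` and
Euler's series of `(a₂ x; q)_∞` solves the same equation with the same constant term `1`, so `p_k`
is the `k`-th coefficient of that Cauchy product. Reversing the order of the factors of
`(q^{-k}; q)_s` turns this convolution into the terminating `₂φ₁`.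
-/

open Finset PowerSeries

noncomputable section

section Field

variable {K : Type*} [Field K]

def qPochhammer (q a : K) (n : ℕ) : K := ∏ i ∈ range n, (1 - a * q ^ i)

/-- The coefficient of `x ^ n` in `(a x; q)_∞ / (b x; q)_∞`. -/
def qBinomialCoeff (q a b : K) (n : ℕ) : K := (∏ i ∈ range n, (b - a * q ^ i)) / qPochhammer q q n

lemma qBinomialCoeff_succ {q a b : K} {n : ℕ} (hq : qPochhammer q q (n + 1) ≠ 0) :
    (1 - q ^ (n + 1)) * qBinomialCoeff q a b (n + 1) = (b - a * q ^ n) * qBinomialCoeff q a b n := by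
  rw [qPochhammer, prod_range_succ, ← pow_succ'] at hq
  obtain ⟨hn, hlast⟩ := mul_ne_zero_iff.mp hq
  rw [qBinomialCoeff, qBinomialCoeff, qPochhammer, qPochhammer, prod_range_succ, prod_range_succ,
    ← pow_succ']
  field_simp

lemma prod_sub_mul_pow_eq {q a b : K} (hb : b ≠ 0) (n : ℕ) :
    ∏ i ∈ range n, (b - a * q ^ i) = b ^ n * qPochhammer q (a / b) n := by
  rw [qPochhammer, ← card_range n, ← prod_const, card_range, ← prod_mul_distrib]
  refine prod_congr rfl fun i _ => ?_
  field_simp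

lemma prod_neg_mul_pow (q a : K) (n : ℕ) :
    ∏ i ∈ range n, -(a * q ^ i) = q ^ (n * (n - 1) / 2) * (-a) ^ n := by
  rw [prod_congr rfl fun i _ => (neg_mul a (q ^ i)).symm, prod_mul_distrib, prod_const, card_range,
    prod_pow_eq_pow_sum, sum_range_id]
  ring

lemma qPochhammer_add (q a : K) (m s : ℕ) :
    qPochhammer q a (m + s) = qPochhammer q a m * ∏ x ∈ range s, (1 - a * q ^ (m + x)) :=
  prod_range_add _ _ _

lemma prod_neg_mul_pow_mul_qPochhammer_zpow_neg {q a : K} (hq : q ≠ 0) (ha : a ≠ 0) (m s : ℕ) :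
    (∏ i ∈ range (m + s), -(a * q ^ i)) * qPochhammer q (q ^ (-((m + s : ℕ) : ℤ))) s * (q / a) ^ s
      = (∏ i ∈ range m, -(a * q ^ i)) * ∏ x ∈ range s, (1 - q * q ^ (m + x)) := by
  have hinv : q ^ (-((m + s : ℕ) : ℤ)) * q ^ (m + s) = 1 := by
    rw [zpow_neg, zpow_natCast, inv_mul_cancel₀ (pow_ne_zero _ hq)]
  set Q := q ^ (-((m + s : ℕ) : ℤ))
  have hreflect : qPochhammer q Q s = ∏ x ∈ range s, (1 - Q * q ^ (s - 1 - x)) :=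
    (prod_range_reflect (fun i => 1 - Q * q ^ i) s).symm
  rw [prod_range_add, hreflect, ← card_range s, ← prod_const, card_range,
    mul_assoc, mul_assoc, ← prod_mul_distrib, ← prod_mul_distrib]
  congr 1
  refine prod_congr rfl fun x hx => ?_
  have hpow : q ^ (m + x) * q ^ (s - 1 - x) * q = q ^ (m + s) := by
    rw [← pow_add, ← pow_succ]
    congr 1
    have := mem_range.mp hx
    omega
  have hqa : a * (q / a) = q := mul_div_cancel₀ q ha
  linear_combination (-(q ^ (m + x)) * (1 - Q * q ^ (s - 1 - x))) * hqa + Q * hpow + hinv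

lemma qBinomialCoeff_mul_qBinomialCoeff_zero {q a₁ a₂ b₁ : K} (hq : q ≠ 0)
    (hqq : ∀ n, qPochhammer q q n ≠ 0) (ha₂ : a₂ ≠ 0) (hb₁ : b₁ ≠ 0) (s m : ℕ) :
    qBinomialCoeff q a₁ b₁ s * qBinomialCoeff q a₂ 0 m
      = q ^ ((s + m) * (s + m - 1) / 2) * (-a₂) ^ (s + m) / qPochhammer q q (s + m) *
        (qPochhammer q (q ^ (-((s + m : ℕ) : ℤ))) s * qPochhammer q (a₁ / b₁) s /
          qPochhammer q q s * (q * b₁ / a₂) ^ s) := by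
  have key := prod_neg_mul_pow_mul_qPochhammer_zpow_neg hq ha₂ m s
  have hsplit := qPochhammer_add q q m s
  have hW : ∏ x ∈ range s, (1 - q * q ^ (m + x)) ≠ 0 :=
    right_ne_zero_of_mul (hsplit ▸ hqq (m + s))
  have hqm := hqq m
  have hqs := hqq s
  rw [← prod_neg_mul_pow, add_comm s m, hsplit, qBinomialCoeff, qBinomialCoeff,
    prod_sub_mul_pow_eq hb₁, show q * b₁ / a₂ = b₁ * (q / a₂) by ring, mul_pow]
  simp only [zero_sub]
  field_simp
  linear_combination -qPochhammer q (a₁ / b₁) s * key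

theorem sum_antidiagonal_qBinomialCoeff_mul {q a₁ a₂ b₁ : K} (hq : q ≠ 0)
    (hqq : ∀ n, qPochhammer q q n ≠ 0) (ha₂ : a₂ ≠ 0) (hb₁ : b₁ ≠ 0) (k : ℕ) :
    ∑ ij ∈ antidiagonal k, qBinomialCoeff q a₁ b₁ ij.1 * qBinomialCoeff q a₂ 0 ij.2
      = q ^ (k * (k - 1) / 2) * (-a₂) ^ k / qPochhammer q q k *
        ∑ s ∈ range (k + 1), qPochhammer q (q ^ (-(k : ℤ))) s * qPochhammer q (a₁ / b₁) s /
          qPochhammer q q s * (q * b₁ / a₂) ^ s := by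
  rw [mul_sum, Nat.sum_antidiagonal_eq_sum_range_succ
    (fun s m => qBinomialCoeff q a₁ b₁ s * qBinomialCoeff q a₂ 0 m)]
  refine sum_congr rfl fun s hs => ?_
  obtain ⟨m, rfl⟩ := Nat.exists_eq_add_of_le (mem_range_succ_iff.mp hs)
  rw [Nat.add_sub_cancel_left]
  exact qBinomialCoeff_mul_qBinomialCoeff_zero hq hqq ha₂ hb₁ s m

end Field

lemma pow_succ_ne_one_of_norm_lt_one {𝕜 : Type*} [NormedField 𝕜] {q : 𝕜} (hq : ‖q‖ < 1)
    (n : ℕ) : q ^ (n + 1) ≠ 1 := fun h => by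
  have := congrArg norm h
  rw [norm_pow, norm_one] at this
  exact (pow_lt_one₀ (norm_nonneg q) hq n.succ_ne_zero).ne this

lemma qPochhammer_self_ne_zero {𝕜 : Type*} [NormedField 𝕜] {q : 𝕜} (hq : ‖q‖ < 1) (n : ℕ) :
    qPochhammer q q n ≠ 0 :=
  prod_ne_zero_iff.mpr fun i _ => by
    rw [← pow_succ']
    exact sub_ne_zero.mpr (pow_succ_ne_one_of_norm_lt_one hq i).symm

namespace PowerSeries

section CommRing

variable {R : Type*} [CommRing R]

theorem one_sub_C_mul_X_mul_mk_eq {q a b : R} {c : ℕ → R}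
    (hc : ∀ n, (1 - q ^ (n + 1)) * c (n + 1) = (b - a * q ^ n) * c n) :
    (1 - C b * X) * mk c = (1 - C a * X) * rescale q (mk c) := by
  ext (_ | n)
  · simp [sub_mul, rescale_mk]
  · simp only [sub_mul, one_mul, mul_assoc, map_sub, coeff_C_mul, coeff_succ_X_mul, coeff_rescale,
      coeff_mk]
    linear_combination hc n

theorem coeff_mul_eq_of_coeff_lt {f g : R⟦X⟧} {n : ℕ} (hg : ∀ j < n, coeff j g = 0) :
    coeff n (f * g) = constantCoeff f * coeff n g := by
  rw [coeff_mul, sum_eq_single (0, n)]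
  · simp
  · rintro ⟨i, j⟩ hij hne
    have hlt : j < n := by
      rw [HasAntidiagonal.mem_antidiagonal] at hij
      rw [Ne, Prod.mk.injEq] at hne
      omega
    rw [hg j hlt, mul_zero]
  · simp

theorem eq_of_mul_eq_mul_rescale [NoZeroDivisors R] {q : R} (hq : ∀ n, q ^ (n + 1) ≠ 1)
    {D E f g : R⟦X⟧} (hD : constantCoeff D = 1) (hE : constantCoeff E = 1)
    (hf : D * f = E * rescale q f) (hg : D * g = E * rescale q g)
    (h0 : constantCoeff f = constantCoeff g) : f = g := by
  rw [← sub_eq_zero]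
  set h := f - g
  have hh : D * h = E * rescale q h := by rw [map_sub, mul_sub, mul_sub, hf, hg]
  suffices ∀ n, coeff n h = 0 from ext fun n => by rw [this n, map_zero]
  intro n
  induction n using Nat.strong_induction_on with
  | _ n ih =>
    have hn := congrArg (coeff n) hh
    rw [coeff_mul_eq_of_coeff_lt ih,
      coeff_mul_eq_of_coeff_lt fun j hj => by rw [coeff_rescale, ih j hj, mul_zero],
      hD, hE, coeff_rescale, one_mul, one_mul] at hn
    rcases n with _ | n
    · rw [coeff_zero_eq_constantCoeff_apply, map_sub, h0, sub_self]
    · have : (1 - q ^ (n + 1)) * coeff (n + 1) h = 0 := by linear_combination hn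
      exact (mul_eq_zero.mp this).resolve_left (sub_ne_zero.mpr (hq n).symm)

theorem hasSum_coeff_one_sub_C_mul_X_mul [TopologicalSpace R] [IsTopologicalRing R] {f : R⟦X⟧}
    {a x s : R} (h : HasSum (fun n => coeff n f * x ^ n) s) :
    HasSum (fun n => coeff n ((1 - C a * X) * f) * x ^ n) ((1 - a * x) * s) := by
  have hX : HasSum (fun n => coeff n (X * f) * x ^ n) (x * s) := by
    refine (hasSum_nat_add_iff' 1).mp ?_
    simp only [coeff_succ_X_mul, sum_range_one, coeff_zero_X_mul, zero_mul, sub_zero]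
    simpa only [pow_succ, mul_comm, mul_left_comm, mul_assoc] using h.mul_left x
  simpa [sub_mul, mul_assoc, coeff_C_mul] using h.sub (hX.mul_left a)

end CommRing

theorem constantCoeff_mk_qBinomialCoeff {K : Type*} [Field K] (q a b : K) :
    constantCoeff (mk (qBinomialCoeff q a b)) = 1 := by
  simp [qBinomialCoeff, qPochhammer]

theorem eq_zero_of_hasSum_coeff_mul_pow {𝕜 : Type*} [NontriviallyNormedField 𝕜] {f : 𝕜⟦X⟧}
    {r : ℝ} (hr : 0 < r) (h : ∀ x : 𝕜, ‖x‖ < r → HasSum (fun n => coeff n f * x ^ n) 0) :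
    f = 0 := by
  obtain ⟨x, hx0, hxr⟩ := NormedField.exists_norm_lt 𝕜 hr
  set p := FormalMultilinearSeries.ofScalars 𝕜 fun n => coeff n f
  have hrad : (‖x‖₊ : ENNReal) ≤ p.radius := p.le_radius_of_tendsto (l := 0) <| by
    simpa [p, FormalMultilinearSeries.ofScalars_norm] using
      (h x hxr).summable.tendsto_atTop_zero.norm
  have hball : HasFPowerSeriesOnBall 0 p 0 ‖x‖₊ :=
    { r_le := hrad
      r_pos := by simpa using hx0
      hasSum := fun {y} hy => by
        simpa [p, FormalMultilinearSeries.ofScalars_apply_eq, mul_comm] using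
          h y (lt_trans (by simpa using hy) hxr) }
  have hp := (FormalMultilinearSeries.ofScalars_series_eq_zero 𝕜).mp
    hball.hasFPowerSeriesAt.eq_zero
  ext n
  simpa using congrFun hp n

end PowerSeries

theorem tprod_one_sub_mul_pow_mul {q : ℂ} (hq : ‖q‖ < 1) (c x : ℂ) :
    ∏' n : ℕ, (1 - c * q ^ n * x) = (1 - c * x) * ∏' n : ℕ, (1 - c * q ^ n * (q * x)) := by
  have hmult : Multipliable fun n : ℕ => 1 - c * q ^ (n + 1) * x :=
    (Complex.multipliable_one_add_of_summable
      ((summable_geometric_of_norm_lt_one hq).mul_left (-(c * q * x)))).congr fun n => by ring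
  rw [tprod_eq_zero_mul' (f := fun n => 1 - c * q ^ n * x) hmult, pow_zero, mul_one]
  exact congrArg _ (tprod_congr fun n => by ring)

def qProductRatio (q a₁ a₂ b x : ℂ) : ℂ :=
  (∏' n : ℕ, (1 - a₁ * q ^ n * x)) * (∏' n : ℕ, (1 - a₂ * q ^ n * x)) /
    ∏' n : ℕ, (1 - b * q ^ n * x)

theorem one_sub_mul_qProductRatio {q : ℂ} (hq : ‖q‖ < 1) {a₁ a₂ b x : ℂ} (hbx : 1 - b * x ≠ 0) :
    (1 - b * x) * qProductRatio q a₁ a₂ b x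
      = (1 - a₁ * x) * ((1 - a₂ * x) * qProductRatio q a₁ a₂ b (q * x)) := by
  rw [qProductRatio, qProductRatio, tprod_one_sub_mul_pow_mul hq a₁ x,
    tprod_one_sub_mul_pow_mul hq a₂ x, tprod_one_sub_mul_pow_mul hq b x, mul_div_assoc',
    mul_div_mul_left _ _ hbx]
  ring

theorem one_sub_C_mul_X_mul_mk_eq_of_hasSum {q a₁ a₂ b : ℂ} (hq : ‖q‖ < 1) (hb : b ≠ 0)
    {p : ℕ → ℂ} (hp : ∀ x : ℂ, ‖x‖ < 1 / ‖b‖ →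
      HasSum (fun j : ℕ => p j * x ^ j) (qProductRatio q a₁ a₂ b x)) :
    (1 - C b * X) * PowerSeries.mk p
      = ((1 - C a₁ * X) * (1 - C a₂ * X)) * rescale q (PowerSeries.mk p) := by
  rw [← sub_eq_zero]
  refine eq_zero_of_hasSum_coeff_mul_pow (r := 1 / ‖b‖) (by positivity) fun x hx => ?_
  have hbx : 1 - b * x ≠ 0 := by
    refine sub_ne_zero.mpr fun h => ?_
    have := congrArg norm h
    rw [norm_one, norm_mul] at this
    rw [lt_div_iff₀ (norm_pos_iff.mpr hb)] at hx
    linarith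
  have hqx : ‖q * x‖ < 1 / ‖b‖ := by
    rw [norm_mul]
    exact lt_of_le_of_lt (mul_le_of_le_one_left (norm_nonneg x) hq.le) hx
  have hP : HasSum (fun n => coeff n (PowerSeries.mk p) * x ^ n) (qProductRatio q a₁ a₂ b x) := by
    simpa only [coeff_mk] using hp x hx
  have hPq : HasSum (fun n => coeff n (rescale q (PowerSeries.mk p)) * x ^ n)
      (qProductRatio q a₁ a₂ b (q * x)) := by
    refine (hp (q * x) hqx).congr_fun fun n => ?_
    rw [coeff_rescale, coeff_mk, mul_pow]
    ring
  have := (hasSum_coeff_one_sub_C_mul_X_mul (a := b) hP).sub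
    (hasSum_coeff_one_sub_C_mul_X_mul (a := a₁) (hasSum_coeff_one_sub_C_mul_X_mul (a := a₂) hPq))
  rw [one_sub_mul_qProductRatio hq hbx, sub_self] at this
  simpa only [map_sub, sub_mul, mul_assoc] using this

theorem constantCoeff_mk_of_hasSum_qProductRatio {q a₁ a₂ b : ℂ} {p : ℕ → ℂ} {r : ℝ} (hr : 0 < r)
    (hp : ∀ x : ℂ, ‖x‖ < r → HasSum (fun j : ℕ => p j * x ^ j) (qProductRatio q a₁ a₂ b x)) :
    constantCoeff (PowerSeries.mk p) = 1 := by
  have h0 := hp 0 (by rwa [norm_zero])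
  simp only [qProductRatio, mul_zero, sub_zero, tprod_one, mul_one, div_one] at h0
  simpa using (hasSum_single (f := fun j => p j * (0 : ℂ) ^ j) 0 fun j hj => by
    simp [hj]).unique h0

/-- the Taylor coefficients of `(a_1 x, a_2 x;q)_∞/(b_1 x;q)_∞` are given by
a terminating `₂φ₁` expression (q-Laguerre polynomials). -/
theorem coeff_A4_generating_function_eq_2phi1
    (q : ℂ) (hq0 : 0 < ‖q‖) (hq1 : ‖q‖ < 1)
    (a1 a2 b1 : ℂ) (ha2 : a2 ≠ 0) (hb1 : b1 ≠ 0)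
    (k : ℕ)
    (poch : ℂ → ℕ → ℂ)
    (hpoch : ∀ (c : ℂ) (j : ℕ), poch c j = ∏ i ∈ Finset.range j, (1 - c * q ^ i))
    (p : ℕ → ℂ)
    (hp : ∀ x : ℂ, ‖x‖ < 1 / ‖b1‖ →
      HasSum (fun j : ℕ => p j * x ^ j)
        (((∏' n : ℕ, (1 - a1 * q ^ n * x)) * (∏' n : ℕ, (1 - a2 * q ^ n * x))) /
          (∏' n : ℕ, (1 - b1 * q ^ n * x)))) :
    p k = q ^ (k * (k - 1) / 2) * (-a2) ^ k / poch q k *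
      ∑ s ∈ Finset.range (k + 1),
        poch (q ^ (-(k : ℤ))) s * poch (a1 / b1) s / poch q s * (q * b1 / a2) ^ s := by
  obtain rfl : poch = qPochhammer q := funext₂ hpoch
  have hqq := qPochhammer_self_ne_zero hq1
  set A := PowerSeries.mk (qBinomialCoeff q a1 b1)
  set B := PowerSeries.mk (qBinomialCoeff q a2 0)
  have hA : (1 - C b1 * X) * A = (1 - C a1 * X) * rescale q A :=
    one_sub_C_mul_X_mul_mk_eq fun n => qBinomialCoeff_succ (hqq _)
  have hB : B = (1 - C a2 * X) * rescale q B := by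
    simpa using one_sub_C_mul_X_mul_mk_eq (q := q) (a := a2) (b := 0) fun n =>
      qBinomialCoeff_succ (hqq _)
  have hAB : (1 - C b1 * X) * (A * B) = ((1 - C a1 * X) * (1 - C a2 * X)) * rescale q (A * B) := by
    rw [map_mul]
    linear_combination B * hA + (1 - C a1 * X) * rescale q A * hB
  have hpAB : PowerSeries.mk p = A * B :=
    eq_of_mul_eq_mul_rescale (pow_succ_ne_one_of_norm_lt_one hq1) (by simp) (by simp)
      (one_sub_C_mul_X_mul_mk_eq_of_hasSum (a₁ := a1) (a₂ := a2) hq1 hb1 hp) hAB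
      (by rw [constantCoeff_mk_of_hasSum_qProductRatio (a₁ := a1) (a₂ := a2) (b := b1)
        (by positivity) hp, map_mul, constantCoeff_mk_qBinomialCoeff,
        constantCoeff_mk_qBinomialCoeff, mul_one])
  rw [← coeff_mk k p, hpAB, coeff_mul]
  simp only [A, B, coeff_mk]
  exact sum_antidiagonal_qBinomialCoeff_mul (norm_pos_iff.mp hq0) hqq ha2 hb1 k
end
end

section
/- (Casorati determinant D_1, type q-E_6^{(1)}.) Suppose Y ∈ ℂ[[X]] satisfies (1−a_1X)(1−a_2X)(1−a_3X)·Y(qX) = (1−b_1X)(1−b_2X)(1−b_3X)·Y, let (P, Q) be a Padé pair for Y, and assume the constraint a_1 a_2 a_3 q^m = b_1 b_2 b_3 q^n. Then there exists a polynomial R ∈ ℂ[X] with deg R ≤ 1 such that (1−b_1X)(1−b_2X)(1−b_3X)·P(X)·Q(qX) − (1−a_1X)(1−a_2X)(1−a_3X)·P(qX)·Q(X) = X^{m+n+1}·R. -/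
/-!
Write `E = Y Q - P` and `Λ_a, Λ_b` for the two cubic factors. The functional equation
`Λ_a Y(qX) = Λ_b Y` turns the Casorati determinant into
`Λ_a E(qX) Q - Λ_b E Q(qX)`, which is divisible by `X^(m+n+1)` because `E` is.
On the other hand the determinant has degree at most `m+n+3`, and its coefficient of
`X^(m+n+3)` is `(b₁b₂b₃ q^n - a₁a₂a₃ q^m) p_m q_n = 0`; hence the quotient by `X^(m+n+1)`
has degree `≤ 1`.
-/

open Polynomial

namespace PowerSeries

variable {R : Type*} [CommRing R]

theorem X_pow_dvd_rescale {f : R⟦X⟧} {N : ℕ} (q : R) (h : X ^ N ∣ f) :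
    X ^ N ∣ rescale q f := by
  rw [X_pow_dvd_iff] at h ⊢
  intro k hk
  rw [coeff_rescale, h k hk, mul_zero]

theorem X_pow_dvd_casorati_of_pade {q : R} {A B Y P Q : R⟦X⟧} {N : ℕ}
    (hY : A * rescale q Y = B * Y) (hPade : X ^ N ∣ Y * Q - P) :
    X ^ N ∣ B * P * rescale q Q - A * rescale q P * Q := by
  have key : B * P * rescale q Q - A * rescale q P * Q =
      A * rescale q (Y * Q - P) * Q - B * (Y * Q - P) * rescale q Q := by
    rw [map_sub, map_mul]
    linear_combination (-(rescale q Q * Q)) * hY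
  rw [key]
  exact dvd_sub (((X_pow_dvd_rescale q hPade).mul_left _).mul_right _)
    ((hPade.mul_left _).mul_right _)

end PowerSeries

namespace Polynomial

variable {R : Type*} [CommRing R]

theorem coe_comp_C_mul_X (p : R[X]) (q : R) :
    ((p.comp (C q * X) : R[X]) : PowerSeries R) = PowerSeries.rescale q (p : PowerSeries R) := by
  ext k
  rw [coeff_coe, PowerSeries.coeff_rescale, coeff_coe, comp_C_mul_X_coeff, mul_comm]

theorem natDegree_comp_C_mul_X_le (p : R[X]) (q : R) :
    (p.comp (C q * X)).natDegree ≤ p.natDegree :=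
  natDegree_le_iff_coeff_eq_zero.2 fun k hk => by
    rw [comp_C_mul_X_coeff, coeff_eq_zero_of_natDegree_lt hk, zero_mul]

theorem X_pow_dvd_iff_coe {p : R[X]} {N : ℕ} :
    X ^ N ∣ p ↔ (PowerSeries.X : PowerSeries R) ^ N ∣ (p : PowerSeries R) := by
  simp only [X_pow_dvd_iff, PowerSeries.X_pow_dvd_iff, coeff_coe]

theorem degree_le_of_degree_X_pow_mul_lt {p : R[X]} {N d : ℕ}
    (h : (X ^ N * p).degree < ↑(N + d + 1)) : p.degree ≤ d := by
  rw [degree_le_iff_coeff_zero]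
  intro j hj
  rw [← coeff_X_pow_mul p N j]
  exact (degree_lt_iff_coeff_zero _ _).1 h _ (by norm_cast at hj; omega)

theorem natDegree_one_sub_C_mul_X_le (c : R) : (1 - C c * X).natDegree ≤ 1 := by
  compute_degree

theorem natDegree_triple_one_sub_C_mul_X_le (c₁ c₂ c₃ : R) :
    ((1 - C c₁ * X) * (1 - C c₂ * X) * (1 - C c₃ * X)).natDegree ≤ 3 :=
  natDegree_mul_le_of_le (natDegree_mul_le_of_le (natDegree_one_sub_C_mul_X_le c₁)
    (natDegree_one_sub_C_mul_X_le c₂)) (natDegree_one_sub_C_mul_X_le c₃)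

theorem coeff_three_triple_one_sub_C_mul_X (c₁ c₂ c₃ : R) :
    ((1 - C c₁ * X) * (1 - C c₂ * X) * (1 - C c₃ * X)).coeff 3 = -(c₁ * c₂ * c₃) := by
  have hc (c : R) : (1 - C c * X).coeff 1 = -c := by simp [coeff_one]
  rw [show 3 = (1 + 1) + 1 from rfl,
    coeff_mul_add_eq_of_natDegree_le (natDegree_mul_le_of_le (natDegree_one_sub_C_mul_X_le c₁)
      (natDegree_one_sub_C_mul_X_le c₂)) (natDegree_one_sub_C_mul_X_le c₃),
    coeff_mul_add_eq_of_natDegree_le (natDegree_one_sub_C_mul_X_le c₁)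
      (natDegree_one_sub_C_mul_X_le c₂), hc, hc, hc]
  ring

/-- The Casorati determinant of a Padé pair `(P, Q)` for the `q`-difference equation
`A Y(qX) = B Y`. -/
noncomputable def casorati (q : R) (A B P Q : R[X]) : R[X] :=
  B * P * Q.comp (C q * X) - A * P.comp (C q * X) * Q

theorem X_pow_dvd_casorati {q : R} {A B P Q : R[X]} {Y : PowerSeries R} {N : ℕ}
    (hY : (A : PowerSeries R) * PowerSeries.rescale q Y = B * Y)
    (hPade : (PowerSeries.X : PowerSeries R) ^ N ∣ Y * Q - P) :
    X ^ N ∣ casorati q A B P Q := by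
  rw [X_pow_dvd_iff_coe, casorati]
  push_cast [coe_comp_C_mul_X]
  exact PowerSeries.X_pow_dvd_casorati_of_pade hY hPade

variable {q : R} {A B P Q : R[X]} {k m n : ℕ}

theorem natDegree_casorati_le (hA : A.natDegree ≤ k) (hB : B.natDegree ≤ k)
    (hP : P.natDegree ≤ m) (hQ : Q.natDegree ≤ n) :
    (casorati q A B P Q).natDegree ≤ k + m + n :=
  (max_self (k + m + n)).le.trans' <| natDegree_sub_le_of_le
    (natDegree_mul_le_of_le (natDegree_mul_le_of_le hB hP)
      ((natDegree_comp_C_mul_X_le Q q).trans hQ))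
    (natDegree_mul_le_of_le (natDegree_mul_le_of_le hA ((natDegree_comp_C_mul_X_le P q).trans hP))
      hQ)

theorem coeff_casorati_top (hA : A.natDegree ≤ k) (hB : B.natDegree ≤ k)
    (hP : P.natDegree ≤ m) (hQ : Q.natDegree ≤ n) :
    (casorati q A B P Q).coeff (k + m + n) =
      (B.coeff k * q ^ n - A.coeff k * q ^ m) * P.coeff m * Q.coeff n := by
  have hPq := (natDegree_comp_C_mul_X_le P q).trans hP
  have hQq := (natDegree_comp_C_mul_X_le Q q).trans hQ
  rw [casorati, coeff_sub,
    coeff_mul_add_eq_of_natDegree_le (natDegree_mul_le_of_le hB hP) hQq,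
    coeff_mul_add_eq_of_natDegree_le (natDegree_mul_le_of_le hA hPq) hQ,
    coeff_mul_add_eq_of_natDegree_le hB hP, coeff_mul_add_eq_of_natDegree_le hA hPq,
    comp_C_mul_X_coeff, comp_C_mul_X_coeff]
  ring

theorem degree_casorati_lt (hA : A.natDegree ≤ k) (hB : B.natDegree ≤ k)
    (hP : P.natDegree ≤ m) (hQ : Q.natDegree ≤ n) (h : A.coeff k * q ^ m = B.coeff k * q ^ n) :
    (casorati q A B P Q).degree < ↑(k + m + n) := by
  rw [degree_lt_iff_coeff_zero]
  intro j hj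
  rcases hj.eq_or_lt with rfl | hlt
  · rw [coeff_casorati_top hA hB hP hQ, h, sub_self, zero_mul, zero_mul]
  · exact coeff_eq_zero_of_natDegree_lt ((natDegree_casorati_le hA hB hP hQ).trans_lt hlt)

end Polynomial

/-- Casorati determinant `D_1` for type q-E_6^{(1)}. -/
theorem casorati_D1_qE6
    (q a1 a2 a3 b1 b2 b3 : ℂ) (m n : ℕ)
    (Y : PowerSeries ℂ)
    (hY : (1 - PowerSeries.C a1 * PowerSeries.X) * (1 - PowerSeries.C a2 * PowerSeries.X) *
        (1 - PowerSeries.C a3 * PowerSeries.X) * PowerSeries.rescale q Y =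
      (1 - PowerSeries.C b1 * PowerSeries.X) * (1 - PowerSeries.C b2 * PowerSeries.X) *
        (1 - PowerSeries.C b3 * PowerSeries.X) * Y)
    (hconstraint : a1 * a2 * a3 * q ^ m = b1 * b2 * b3 * q ^ n)
    (P Q : Polynomial ℂ) (hdP : P.degree ≤ m) (hdQ : Q.degree ≤ n)
    (hPade : (PowerSeries.X : PowerSeries ℂ) ^ (m + n + 1) ∣
      Y * (Q : PowerSeries ℂ) - (P : PowerSeries ℂ)) :
    ∃ R : Polynomial ℂ, R.degree ≤ 1 ∧
      (1 - C b1 * X) * (1 - C b2 * X) * (1 - C b3 * X) * P * (Q.comp (C q * X)) -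
          (1 - C a1 * X) * (1 - C a2 * X) * (1 - C a3 * X) * (P.comp (C q * X)) * Q =
        X ^ (m + n + 1) * R := by
  set A : ℂ[X] := (1 - C a1 * X) * (1 - C a2 * X) * (1 - C a3 * X)
  set B : ℂ[X] := (1 - C b1 * X) * (1 - C b2 * X) * (1 - C b3 * X)
  obtain ⟨R, hR⟩ : X ^ (m + n + 1) ∣ casorati q A B P Q :=
    X_pow_dvd_casorati (by push_cast [A, B]; exact hY) hPade
  have hdeg : (casorati q A B P Q).degree < ↑(3 + m + n) :=
    degree_casorati_lt (natDegree_triple_one_sub_C_mul_X_le a1 a2 a3)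
      (natDegree_triple_one_sub_C_mul_X_le b1 b2 b3)
      (natDegree_le_of_degree_le hdP) (natDegree_le_of_degree_le hdQ) <| by
        rw [coeff_three_triple_one_sub_C_mul_X, coeff_three_triple_one_sub_C_mul_X]
        linear_combination -hconstraint
  refine ⟨R, degree_le_of_degree_X_pow_mul_lt (N := m + n + 1) (d := 1) ?_, hR⟩
  rw [← hR]
  exact hdeg.trans_le (by norm_cast; omega)
end

section
/- (Casorati determinant D_2, type q-E_6^{(1)}.) Suppose Y, Ȳ ∈ ℂ[[X]] satisfy (1−a_1X)·Ȳ = (1−b_1X)·Y, let (P, Q) be a Padé pair for Y and (P̄, Q̄) a Padé pair for Ȳ. Then there exists a constant c ∈ ℂ such that (1−b_1X)·P·Q̄ − (1−a_1X)·P̄·Q = c·X^{m+n+1}. -/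
open Polynomial

/-!
Multiplying the two Padé conditions by `(1 - b₁X) Q̄` and `(1 - a₁X) Q` and using the relation
between `Y` and `Ȳ` eliminates the series, so `X^(m+n+1)` divides the polynomial
`D = (1 - b₁X) P Q̄ - (1 - a₁X) P̄ Q`. Since `deg D ≤ m + n + 1`, `D` is a monomial of that degree.
-/

theorem dvd_casorati_of_dvd_sub {R : Type*} [CommRing R] {d α β Y Ybar P Q Pbar Qbar : R}
    (hYY : α * Ybar = β * Y) (h : d ∣ Y * Q - P) (hbar : d ∣ Ybar * Qbar - Pbar) :
    d ∣ β * P * Qbar - α * Pbar * Q := by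
  have key : β * P * Qbar - α * Pbar * Q =
      α * Q * (Ybar * Qbar - Pbar) - β * Qbar * (Y * Q - P) := by
    linear_combination (-(Q * Qbar)) * hYY
  rw [key]
  exact dvd_sub (dvd_mul_of_dvd_right hbar _) (dvd_mul_of_dvd_right h _)

theorem Polynomial.X_pow_dvd_coe_iff {R : Type*} [CommSemiring R] {p : R[X]} {n : ℕ} :
    (PowerSeries.X : PowerSeries R) ^ n ∣ (p : PowerSeries R) ↔ X ^ n ∣ p := by
  simp only [PowerSeries.X_pow_dvd_iff, Polynomial.X_pow_dvd_iff, coeff_coe]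

theorem Polynomial.eq_C_mul_X_pow_of_X_pow_dvd {R : Type*} [Semiring R] {p : R[X]} {n : ℕ}
    (hdvd : X ^ n ∣ p) (hdeg : p.natDegree ≤ n) : p = C (p.coeff n) * X ^ n := by
  ext i
  rw [coeff_C_mul_X_pow]
  rcases lt_trichotomy i n with hi | rfl | hi
  · rw [X_pow_dvd_iff.mp hdvd i hi, if_neg hi.ne]
  · rw [if_pos rfl]
  · rw [coeff_eq_zero_of_natDegree_lt (hdeg.trans_lt hi), if_neg hi.ne']

theorem Polynomial.natDegree_one_sub_C_mul_X_le_s9 {R : Type*} [Ring R] (a : R) :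
    (1 - C a * X).natDegree ≤ 1 := by
  compute_degree!

theorem Polynomial.natDegree_linear_mul_mul_le {R : Type*} [Ring R] {l P Q : R[X]} {m n : ℕ}
    (hl : l.natDegree ≤ 1) (hP : P.natDegree ≤ m) (hQ : Q.natDegree ≤ n) :
    (l * P * Q).natDegree ≤ m + n + 1 := by
  calc (l * P * Q).natDegree ≤ l.natDegree + P.natDegree + Q.natDegree :=
        natDegree_mul_le.trans (add_le_add_left natDegree_mul_le _)
    _ ≤ m + n + 1 := by omega

theorem casorati_D2_qE6_general
    (a1 b1 : ℂ) (m n : ℕ)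
    (Y Ybar : PowerSeries ℂ)
    (hYY : (1 - PowerSeries.C a1 * PowerSeries.X) * Ybar =
      (1 - PowerSeries.C b1 * PowerSeries.X) * Y)
    (P Q : Polynomial ℂ) (hdP : P.degree ≤ m) (hdQ : Q.degree ≤ n)
    (hPade : (PowerSeries.X : PowerSeries ℂ) ^ (m + n + 1) ∣
      Y * (Q : PowerSeries ℂ) - (P : PowerSeries ℂ))
    (Pbar Qbar : Polynomial ℂ) (hdPbar : Pbar.degree ≤ m) (hdQbar : Qbar.degree ≤ n)
    (hPadebar : (PowerSeries.X : PowerSeries ℂ) ^ (m + n + 1) ∣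
      Ybar * (Qbar : PowerSeries ℂ) - (Pbar : PowerSeries ℂ)) :
    ∃ c : ℂ,
      (1 - C b1 * X) * P * Qbar - (1 - C a1 * X) * Pbar * Q =
        C c * X ^ (m + n + 1) := by
  have hdvd : X ^ (m + n + 1) ∣ (1 - C b1 * X) * P * Qbar - (1 - C a1 * X) * Pbar * Q := by
    rw [← X_pow_dvd_coe_iff]
    push_cast
    exact dvd_casorati_of_dvd_sub hYY hPade hPadebar
  rw [← natDegree_le_iff_degree_le] at hdP hdQ hdPbar hdQbar
  have hdeg := (natDegree_sub_le_of_le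
    (natDegree_linear_mul_mul_le (natDegree_one_sub_C_mul_X_le_s9 b1) hdP hdQbar)
    (natDegree_linear_mul_mul_le (natDegree_one_sub_C_mul_X_le_s9 a1) hdPbar hdQ)).trans
    (max_self _).le
  exact ⟨_, eq_C_mul_X_pow_of_X_pow_dvd hdvd hdeg⟩

/-- Casorati determinant `D_2` for type q-E_6^{(1)}. -/
theorem casorati_D2_qE6
    (q a1 a2 a3 b1 b2 b3 : ℂ) (m n : ℕ)
    (Y Ybar : PowerSeries ℂ)
    (hYY : (1 - PowerSeries.C a1 * PowerSeries.X) * Ybar =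
      (1 - PowerSeries.C b1 * PowerSeries.X) * Y)
    (P Q : Polynomial ℂ) (hdP : P.degree ≤ m) (hdQ : Q.degree ≤ n)
    (hPade : (PowerSeries.X : PowerSeries ℂ) ^ (m + n + 1) ∣
      Y * (Q : PowerSeries ℂ) - (P : PowerSeries ℂ))
    (Pbar Qbar : Polynomial ℂ) (hdPbar : Pbar.degree ≤ m) (hdQbar : Qbar.degree ≤ n)
    (hPadebar : (PowerSeries.X : PowerSeries ℂ) ^ (m + n + 1) ∣
      Ybar * (Qbar : PowerSeries ℂ) - (Pbar : PowerSeries ℂ)) :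
    ∃ c : ℂ,
      (1 - C b1 * X) * P * Qbar - (1 - C a1 * X) * Pbar * Q =
        C c * X ^ (m + n + 1) :=
  casorati_D2_qE6_general a1 b1 m n Y Ybar hYY P Q hdP hdQ hPade Pbar Qbar hdPbar hdQbar hPadebar
end

section
/- (Casorati determinant D_2, type q-(A_2+A_1)^{(1)}.) Suppose Y, Ȳ ∈ ℂ[[X]] satisfy (1−a_1X)·Ȳ = Y, let (P, Q) be a Padé pair for Y and (P̄, Q̄) a Padé pair for Ȳ. Then there exists a constant c ∈ ℂ such that P·Q̄ − (1−a_1X)·P̄·Q = c·X^{m+n+1}. -/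
/-!
With `Y = (1 - a₁X)·Ȳ`, the Casorati combination `P Q̄ - (1 - a₁X) P̄ Q` equals
`(1 - a₁X)(Ȳ Q̄ - P̄) Q - (Y Q - P) Q̄`, so it is divisible by `X^(m+n+1)`. As a polynomial of
degree at most `m + n + 1`, it is then a constant multiple of `X^(m+n+1)`.
-/

open Polynomial

theorem dvd_mul_sub_mul_mul_of_dvd_mul_sub {R : Type*} [CommRing R] {d s y ybar p q pbar qbar : R}
    (hy : s * ybar = y) (h : d ∣ y * q - p) (hbar : d ∣ ybar * qbar - pbar) :
    d ∣ p * qbar - s * pbar * q := by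
  have hcasorati : p * qbar - s * pbar * q = s * (ybar * qbar - pbar) * q - (y * q - p) * qbar := by
    rw [← hy]; ring
  rw [hcasorati]
  exact dvd_sub ((hbar.mul_left s).mul_right q) (h.mul_right qbar)

namespace Polynomial

variable {R : Type*}

theorem X_pow_dvd_coe_iff_s18 [CommSemiring R] {p : R[X]} {N : ℕ} :
    (PowerSeries.X : PowerSeries R) ^ N ∣ (p : PowerSeries R) ↔ X ^ N ∣ p := by
  simp only [PowerSeries.X_pow_dvd_iff, Polynomial.X_pow_dvd_iff, coeff_coe]

theorem eq_C_mul_X_pow_of_X_pow_dvd_of_degree_le [Semiring R] {p : R[X]} {N : ℕ}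
    (hdvd : X ^ N ∣ p) (hdeg : p.degree ≤ N) : p = C (p.coeff N) * X ^ N := by
  ext k
  rw [coeff_C_mul, coeff_X_pow]
  rcases lt_trichotomy k N with hk | rfl | hk
  · simp [X_pow_dvd_iff.mp hdvd k hk, hk.ne]
  · simp
  · rw [coeff_eq_zero_of_degree_lt (hdeg.trans_lt (by exact_mod_cast hk))]
    simp [hk.ne']

theorem degree_one_sub_C_mul_X_le [Ring R] (a : R) : (1 - C a * X).degree ≤ 1 := by
  compute_degree

end Polynomial

theorem casorati_D2_qA2A1_general
    (a1 : ℂ) (m n : ℕ)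
    (Y Ybar : PowerSeries ℂ)
    (hYY : (1 - PowerSeries.C a1 * PowerSeries.X) * Ybar = Y)
    (P Q : Polynomial ℂ) (hdP : P.degree ≤ m) (hdQ : Q.degree ≤ n)
    (hPade : (PowerSeries.X : PowerSeries ℂ) ^ (m + n + 1) ∣
      Y * (Q : PowerSeries ℂ) - (P : PowerSeries ℂ))
    (Pbar Qbar : Polynomial ℂ) (hdPbar : Pbar.degree ≤ m) (hdQbar : Qbar.degree ≤ n)
    (hPadebar : (PowerSeries.X : PowerSeries ℂ) ^ (m + n + 1) ∣
      Ybar * (Qbar : PowerSeries ℂ) - (Pbar : PowerSeries ℂ)) :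
    ∃ c : ℂ,
      P * Qbar - (1 - C a1 * X) * Pbar * Q = C c * X ^ (m + n + 1) := by
  have hdvd : X ^ (m + n + 1) ∣ P * Qbar - (1 - C a1 * X) * Pbar * Q := by
    rw [← X_pow_dvd_coe_iff_s18]
    push_cast
    exact dvd_mul_sub_mul_mul_of_dvd_mul_sub hYY hPade hPadebar
  have hdeg : (P * Qbar - (1 - C a1 * X) * Pbar * Q).degree ≤ ↑(m + n + 1) := by
    refine (degree_sub_le _ _).trans (max_le ?_ ?_)
    · refine (degree_mul_le _ _).trans ((add_le_add hdP hdQbar).trans ?_)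
      exact_mod_cast (by omega : m + n ≤ m + n + 1)
    · refine (degree_mul_le _ _).trans ((add_le_add ((degree_mul_le _ _).trans
        (add_le_add (degree_one_sub_C_mul_X_le a1) hdPbar)) hdQ).trans ?_)
      exact_mod_cast (by omega : 1 + m + n ≤ m + n + 1)
  exact ⟨_, eq_C_mul_X_pow_of_X_pow_dvd_of_degree_le hdvd hdeg⟩

/-- Casorati determinant `D_2` for type q-(A_2+A_1)^{(1)}. -/
theorem casorati_D2_qA2A1
    (q a1 a2 : ℂ) (m n : ℕ)
    (Y Ybar : PowerSeries ℂ)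
    (hYY : (1 - PowerSeries.C a1 * PowerSeries.X) * Ybar = Y)
    (P Q : Polynomial ℂ) (hdP : P.degree ≤ m) (hdQ : Q.degree ≤ n)
    (hPade : (PowerSeries.X : PowerSeries ℂ) ^ (m + n + 1) ∣
      Y * (Q : PowerSeries ℂ) - (P : PowerSeries ℂ))
    (Pbar Qbar : Polynomial ℂ) (hdPbar : Pbar.degree ≤ m) (hdQbar : Qbar.degree ≤ n)
    (hPadebar : (PowerSeries.X : PowerSeries ℂ) ^ (m + n + 1) ∣
      Ybar * (Qbar : PowerSeries ℂ) - (Pbar : PowerSeries ℂ)) :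
    ∃ c : ℂ,
      P * Qbar - (1 - C a1 * X) * Pbar * Q = C c * X ^ (m + n + 1) :=
  casorati_D2_qA2A1_general a1 m n Y Ybar hYY P Q hdP hdQ hPade Pbar Qbar hdPbar hdQbar hPadebar
end
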